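/- arXiv:2602.03357 — 9 statements merged into one kernel-verified Lean document; each statement's English description precedes it below -/
import Mathlib

section
/- Let u be a proximal point of φ at w with parameter γ and let v' be a proximal point of φ at v with parameter γ. Then ⟪w − v, u − v'⟫ ≥ (1 − γρ)‖u − v'‖². (Lemma on weakly convex proximal mappings, part 1.) -/
open scoped RealInnerProductSpace

set_option maxHeartbeats 1000000 in
/-- Lemma on weakly convex proximal mappings, part 1: if `u` is a proximal point of `φ` at `w`
with parameter `γ` and `v'` is a proximal point of `φ` at `v` with parameter `γ`, then
`⟪w − v, u − v'⟫ ≥ (1 − γρ)‖u − v'‖²`. -/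
theorem prox_weakly_convex_inner_ge
    {p : ℕ} (hp : 1 ≤ p) (ρ γ : ℝ) (hρ : 0 ≤ ρ) (hγ : 0 < γ) (hγρ : γ * ρ < 1)
    (φ : EuclideanSpace ℝ (Fin p) → ℝ)
    (hφlsc : LowerSemicontinuous φ)
    (hφwc : ConvexOn ℝ Set.univ (fun y => φ y + ρ / 2 * ‖y‖ ^ 2))
    (w v u v' : EuclideanSpace ℝ (Fin p))
    (hu : IsMinOn (fun y => φ y + ‖y - w‖ ^ 2 / (2 * γ)) Set.univ u)
    (hv' : IsMinOn (fun y => φ y + ‖y - v‖ ^ 2 / (2 * γ)) Set.univ v') :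
    ⟪w - v, u - v'⟫ ≥ (1 - γ * ρ) * ‖u - v'‖ ^ 2 := by
  set d := v' - u with hd
  have hγ2 : (0:ℝ) < 2 * γ := by linarith
  have hnorm : ‖u - v'‖ = ‖d‖ := by rw [hd, norm_sub_rev]
  have hinner : ⟪w - v, u - v'⟫ = ⟪v, d⟫ - ⟪w, d⟫ := by
    have h : u - v' = -d := by rw [hd]; abel
    rw [h, inner_neg_right, inner_sub_left]; ring
  have i3 : ⟪v', d⟫ - ⟪u, d⟫ = ‖d‖ ^ 2 := by
    rw [← inner_sub_left, ← hd, real_inner_self_eq_norm_sq]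
  have key : ∀ t : ℝ, 0 < t → t ≤ 1 →
      (1 - t) * (1 - γ * ρ) * ‖d‖ ^ 2 ≤ ⟪v, d⟫ - ⟪w, d⟫ := by
    intro t ht0 ht1
    have hts : ‖t • d‖ ^ 2 = t ^ 2 * ‖d‖ ^ 2 := by
      rw [norm_smul, mul_pow, Real.norm_eq_abs, sq_abs]
    have h1 : φ u + ‖u - w‖ ^ 2 / (2 * γ) ≤
        φ (u + t • d) + ‖(u + t • d) - w‖ ^ 2 / (2 * γ) :=
      isMinOn_iff.mp hu _ (Set.mem_univ _)
    have h2 : φ v' + ‖v' - v‖ ^ 2 / (2 * γ) ≤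
        φ (v' - t • d) + ‖(v' - t • d) - v‖ ^ 2 / (2 * γ) :=
      isMinOn_iff.mp hv' _ (Set.mem_univ _)
    have h3 : φ (u + t • d) + ρ / 2 * ‖u + t • d‖ ^ 2 ≤
        (1 - t) * (φ u + ρ / 2 * ‖u‖ ^ 2) + t * (φ v' + ρ / 2 * ‖v'‖ ^ 2) := by
      have hc := hφwc.2 (Set.mem_univ u) (Set.mem_univ v')
        (by linarith : (0:ℝ) ≤ 1 - t) ht0.le (by ring)
      have heq : (1 - t) • u + t • v' = u + t • d := by rw [hd]; module
      rw [heq] at hc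
      exact hc
    have h4 : φ (v' - t • d) + ρ / 2 * ‖v' - t • d‖ ^ 2 ≤
        (1 - t) * (φ v' + ρ / 2 * ‖v'‖ ^ 2) + t * (φ u + ρ / 2 * ‖u‖ ^ 2) := by
      have hc := hφwc.2 (Set.mem_univ v') (Set.mem_univ u)
        (by linarith : (0:ℝ) ≤ 1 - t) ht0.le (by ring)
      have heq : (1 - t) • v' + t • u = v' - t • d := by rw [hd]; module
      rw [heq] at hc
      exact hc
    have e1 : ‖(u + t • d) - w‖ ^ 2
        = ‖u - w‖ ^ 2 + 2 * (t * (⟪u, d⟫ - ⟪w, d⟫)) + t ^ 2 * ‖d‖ ^ 2 := by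
      have h : (u + t • d) - w = (u - w) + t • d := by module
      rw [h, norm_add_sq_real, real_inner_smul_right, hts, inner_sub_left]
    have e2 : ‖(v' - t • d) - v‖ ^ 2
        = ‖v' - v‖ ^ 2 - 2 * (t * (⟪v', d⟫ - ⟪v, d⟫)) + t ^ 2 * ‖d‖ ^ 2 := by
      have h : (v' - t • d) - v = (v' - v) - t • d := by module
      rw [h, norm_sub_sq_real, real_inner_smul_right, hts, inner_sub_left]
    have e3 : ‖u + t • d‖ ^ 2 = ‖u‖ ^ 2 + 2 * (t * ⟪u, d⟫) + t ^ 2 * ‖d‖ ^ 2 := by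
      rw [norm_add_sq_real, real_inner_smul_right, hts]
    have e4 : ‖v' - t • d‖ ^ 2 = ‖v'‖ ^ 2 - 2 * (t * ⟪v', d⟫) + t ^ 2 * ‖d‖ ^ 2 := by
      rw [norm_sub_sq_real, real_inner_smul_right, hts]
    -- clear denominators in h1, h2
    have h1a : (‖u - w‖ ^ 2 - ‖(u + t • d) - w‖ ^ 2) / (2 * γ)
        ≤ φ (u + t • d) - φ u := by rw [sub_div]; linarith
    have h1b := (div_le_iff₀ hγ2).mp h1a
    have h2a : (‖v' - v‖ ^ 2 - ‖(v' - t • d) - v‖ ^ 2) / (2 * γ)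
        ≤ φ (v' - t • d) - φ v' := by rw [sub_div]; linarith
    have h2b := (div_le_iff₀ hγ2).mp h2a
    rw [e1] at h1b
    rw [e2] at h2b
    rw [e3] at h3
    rw [e4] at h4
    have hud : ⟪u, d⟫ = ⟪v', d⟫ - ‖d‖ ^ 2 := by linarith [i3]
    rw [hud] at h1b h3
    have h3b := mul_le_mul_of_nonneg_right h3 hγ2.le
    have h4b := mul_le_mul_of_nonneg_right h4 hγ2.le
    have comb : 0 ≤ 2 * t * ((⟪v, d⟫ - ⟪w, d⟫) - (1 - t) * (1 - γ * ρ) * ‖d‖ ^ 2) := by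
      linarith [h1b, h2b, h3b, h4b]
    by_contra hneg
    push_neg at hneg
    have h2t : (0:ℝ) < 2 * t := by linarith
    have := mul_neg_of_pos_of_neg h2t
      (by linarith : (⟪v, d⟫ - ⟪w, d⟫) - (1 - t) * (1 - γ * ρ) * ‖d‖ ^ 2 < 0)
    linarith
  rw [ge_iff_le, hinner, hnorm]
  rcases eq_or_ne d 0 with h0 | h0
  · simp [h0]
  · have hK : 0 < (1 - γ * ρ) * ‖d‖ ^ 2 := by
      have h1 : 0 < ‖d‖ := norm_pos_iff.mpr h0
      have h2 := pow_pos h1 2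
      nlinarith
    set K := (1 - γ * ρ) * ‖d‖ ^ 2 with hKdef
    set c := ⟪v, d⟫ - ⟪w, d⟫ with hcdef
    by_contra hc
    push_neg at hc
    set t := min 1 ((K - c) / (2 * K)) with htdef
    have ht0 : 0 < t := lt_min one_pos (div_pos (by linarith) (by linarith))
    have ht1 : t ≤ 1 := min_le_left _ _
    have hkey := key t ht0 ht1
    have htK : t * K ≤ (K - c) / 2 := by
      have h := min_le_right 1 ((K - c) / (2 * K))
      have h2 : t * K ≤ ((K - c) / (2 * K)) * K :=
        mul_le_mul_of_nonneg_right h hK.le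
      have h3 : ((K - c) / (2 * K)) * K = (K - c) / 2 := by
        field_simp
      linarith [h2, h3.le]
    have : (1 - t) * K = K - t * K := by ring
    nlinarith [hkey, htK, hc]
end

section
/- Let u be a proximal point of φ at w with parameter γ and let v' be a proximal point of φ at v with parameter γ. Then ‖w − v‖ ≥ (1 − γρ)‖u − v'‖. (Lemma on weakly convex proximal mappings, part 2.) -/
open scoped RealInnerProductSpace

lemma prox_quad_growth {p : ℕ} (ρ γ : ℝ) (hγ : 0 < γ) (hγρ : γ * ρ < 1)
    (φ : EuclideanSpace ℝ (Fin p) → ℝ)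
    (hφwc : ConvexOn ℝ Set.univ (fun y => φ y + ρ / 2 * ‖y‖ ^ 2))
    (w u : EuclideanSpace ℝ (Fin p))
    (hu : IsMinOn (fun y => φ y + ‖y - w‖ ^ 2 / (2 * γ)) Set.univ u)
    (y : EuclideanSpace ℝ (Fin p)) :
    φ u + ‖u - w‖ ^ 2 / (2 * γ) + (1/γ - ρ)/2 * ‖y - u‖ ^ 2
      ≤ φ y + ‖y - w‖ ^ 2 / (2 * γ) := by
  set g : EuclideanSpace ℝ (Fin p) → ℝ := fun y => φ y + ‖y - w‖ ^ 2 / (2 * γ) with hg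
  have hγ' : (γ:ℝ) ≠ 0 := ne_of_gt hγ
  -- strong convexity of g
  have hlin : ConvexOn ℝ (Set.univ : Set (EuclideanSpace ℝ (Fin p)))
      (fun x => (‖w‖ ^ 2 - 2 * ⟪x, w⟫) / (2 * γ)) := by
    refine ⟨convex_univ, fun x _ z _ a b ha hb hab => le_of_eq ?_⟩
    obtain rfl := eq_sub_of_add_eq hab
    simp only [inner_add_left, real_inner_smul_left, smul_eq_mul]
    ring
  have hSC : StrongConvexOn Set.univ (1/γ - ρ) g := by
    rw [strongConvexOn_iff_convex]
    have : (fun x => g x - (1/γ - ρ)/2 * ‖x‖ ^ 2)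
        = fun x => (φ x + ρ / 2 * ‖x‖ ^ 2) + (‖w‖ ^ 2 - 2 * ⟪x, w⟫) / (2 * γ) := by
      funext x
      have hx : ‖x - w‖ ^ 2 = ‖x‖ ^ 2 - 2 * ⟪x, w⟫ + ‖w‖ ^ 2 := by
        rw [@norm_sub_sq_real]
      simp only [hg, hx]
      field_simp
      ring
    rw [this]
    exact hφwc.add hlin
  -- quadratic growth via limit t → 0
  have key : ∀ t : ℝ, 0 < t → t < 1 →
      g u + (1/γ - ρ)/2 * (1 - t) * ‖u - y‖ ^ 2 ≤ g y := by
    intro t ht ht1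
    have hcomb := hSC.2 (Set.mem_univ u) (Set.mem_univ y)
      (show (0:ℝ) ≤ 1 - t by linarith) (le_of_lt ht) (by ring)
    have hmin := hu (Set.mem_univ ((1 - t) • u + t • y))
    simp only [smul_eq_mul] at hcomb
    have h2 : t * (g u + (1/γ - ρ)/2 * (1 - t) * ‖u - y‖ ^ 2) ≤ t * g y := by
      have : g u ≤ (1 - t) * g u + t * g y - (1/γ - ρ)/2 * ‖u - y‖ ^ 2 * ((1-t)*t) := by
        calc g u ≤ g ((1 - t) • u + t • y) := hmin
        _ ≤ (1 - t) * g u + t * g y - (1/γ - ρ)/2 * ‖u - y‖ ^ 2 * ((1-t)*t) := by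
            convert hcomb using 1; ring
      nlinarith [this]
    exact le_of_mul_le_mul_left h2 ht
  have hfinal : g u + (1/γ - ρ)/2 * ‖u - y‖ ^ 2 ≤ g y := by
    apply le_of_forall_pos_le_add
    intro ε hε
    set C := (1/γ - ρ)/2 * ‖u - y‖ ^ 2 with hC
    have hC0 : 0 ≤ C := by
      have : 0 < 1/γ - ρ := by
        rw [sub_pos, lt_div_iff₀ hγ]; linarith [mul_comm γ ρ]
      positivity
    set t : ℝ := min (1/2) (ε / (C + 1)) with htdef
    have ht : 0 < t := lt_min (by norm_num) (by positivity)
    have ht1 : t < 1 := lt_of_le_of_lt (min_le_left _ _) (by norm_num)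
    have htC : t * C ≤ ε := by
      have h1 : t ≤ ε / (C + 1) := min_le_right _ _
      have : t * C ≤ (ε / (C + 1)) * (C + 1) := by
        apply mul_le_mul h1 (by linarith) hC0 (by positivity)
      rwa [div_mul_cancel₀ _ (by positivity : C + 1 ≠ 0)] at this
    have hk := key t ht ht1
    have hexp : (1/γ - ρ)/2 * (1 - t) * ‖u - y‖ ^ 2 = C - t * C := by rw [hC]; ring
    rw [hexp] at hk
    linarith
  have hrev : ‖y - u‖ = ‖u - y‖ := norm_sub_rev _ _
  calc φ u + ‖u - w‖ ^ 2 / (2 * γ) + (1/γ - ρ)/2 * ‖y - u‖ ^ 2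
      = g u + (1/γ - ρ)/2 * ‖u - y‖ ^ 2 := by rw [hrev]
    _ ≤ g y := hfinal
    _ = φ y + ‖y - w‖ ^ 2 / (2 * γ) := rfl

/-- Lemma on weakly convex proximal mappings, part 2: if `u` is a proximal point of `φ` at `w`
with parameter `γ` and `v'` is a proximal point of `φ` at `v` with parameter `γ`, then
`‖w − v‖ ≥ (1 − γρ)‖u − v'‖`. -/
theorem prox_weakly_convex_norm_ge
    {p : ℕ} (hp : 1 ≤ p) (ρ γ : ℝ) (hρ : 0 ≤ ρ) (hγ : 0 < γ) (hγρ : γ * ρ < 1)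
    (φ : EuclideanSpace ℝ (Fin p) → ℝ)
    (hφlsc : LowerSemicontinuous φ)
    (hφwc : ConvexOn ℝ Set.univ (fun y => φ y + ρ / 2 * ‖y‖ ^ 2))
    (w v u v' : EuclideanSpace ℝ (Fin p))
    (hu : IsMinOn (fun y => φ y + ‖y - w‖ ^ 2 / (2 * γ)) Set.univ u)
    (hv' : IsMinOn (fun y => φ y + ‖y - v‖ ^ 2 / (2 * γ)) Set.univ v') :
    ‖w - v‖ ≥ (1 - γ * ρ) * ‖u - v'‖ := by
  have k1 := prox_quad_growth ρ γ hγ hγρ φ hφwc w u hu v'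
  have k2 := prox_quad_growth ρ γ hγ hγρ φ hφwc v v' hv' u
  have hrev : ‖v' - u‖ = ‖u - v'‖ := norm_sub_rev _ _
  rw [hrev] at k1
  -- inner product identity
  have hid : ‖v' - w‖ ^ 2 - ‖u - w‖ ^ 2 + ‖u - v‖ ^ 2 - ‖v' - v‖ ^ 2
      = 2 * ⟪u - v', w - v⟫ := by
    simp only [@norm_sub_sq_real, inner_sub_left, inner_sub_right]
    ring
  -- sum of k1 and k2 gives
  have hsum : (1/γ - ρ) * ‖u - v'‖ ^ 2 ≤ 2 * ⟪u - v', w - v⟫ / (2 * γ) := by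
    rw [← hid]
    have hq : ‖v' - w‖ ^ 2 / (2 * γ) - ‖u - w‖ ^ 2 / (2 * γ) + ‖u - v‖ ^ 2 / (2 * γ)
        - ‖v' - v‖ ^ 2 / (2 * γ)
        = (‖v' - w‖ ^ 2 - ‖u - w‖ ^ 2 + ‖u - v‖ ^ 2 - ‖v' - v‖ ^ 2) / (2 * γ) := by ring
    have hA : (1/γ - ρ) * ‖u - v'‖ ^ 2 = 2 * ((1/γ - ρ)/2 * ‖u - v'‖ ^ 2) := by ring
    linarith [k1, k2, hq, hA.le, hA.ge]
  have hCS : ⟪u - v', w - v⟫ ≤ ‖u - v'‖ * ‖w - v‖ := real_inner_le_norm _ _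
  have hγα : γ * (1/γ - ρ) = 1 - γ * ρ := by field_simp
  rcases eq_or_lt_of_le (norm_nonneg (u - v')) with h0 | h0
  · rw [← h0, mul_zero]; exact norm_nonneg _
  · have hmain : (1 - γ * ρ) * ‖u - v'‖ ^ 2 ≤ ‖u - v'‖ * ‖w - v‖ := by
      have := mul_le_mul_of_nonneg_left hsum (le_of_lt hγ)
      calc (1 - γ * ρ) * ‖u - v'‖ ^ 2 = γ * ((1/γ - ρ) * ‖u - v'‖ ^ 2) := by
            rw [← mul_assoc, hγα]
        _ ≤ γ * (2 * ⟪u - v', w - v⟫ / (2 * γ)) := this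
        _ = ⟪u - v', w - v⟫ := by field_simp
        _ ≤ ‖u - v'‖ * ‖w - v‖ := hCS
    rw [ge_iff_le]
    nlinarith [hmain, h0]
end

section
/- The normal map F^nor is Lipschitz continuous with constant L_F := (L + 2/γ)/(1 − γρ); that is, for all z, z' ∈ ℝ^p, ‖F^nor(z) − F^nor(z')‖ ≤ L_F ‖z − z'‖. -/
open scoped RealInnerProductSpace
set_option maxHeartbeats 1000000

lemma combo_norm_sq {E : Type*} [NormedAddCommGroup E] [InnerProductSpace ℝ E]
    (a b : E) (t : ℝ) :
    ‖(1-t)•a + t•b‖^2 = (1-t)*‖a‖^2 + t*‖b‖^2 - t*(1-t)*‖a-b‖^2 := by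
  simp only [← real_inner_self_eq_norm_sq, inner_add_left, inner_add_right,
    inner_sub_left, inner_sub_right, real_inner_smul_left, real_inner_smul_right,
    real_inner_comm a b]
  ring

lemma inner_expand {E : Type*} [NormedAddCommGroup E] [InnerProductSpace ℝ E]
    (u u' z z' : E) :
    ‖u'-z‖^2 + ‖u-z'‖^2 - ‖u-z‖^2 - ‖u'-z'‖^2 = 2 * ⟪u'-u, z'-z⟫ := by
  simp only [← real_inner_self_eq_norm_sq, inner_sub_left, inner_sub_right,
    real_inner_comm z u, real_inner_comm z' u, real_inner_comm z u', real_inner_comm z' u']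
  ring

/-- The normal map `F^nor(z) = ∇f(prox_{γφ}(z)) + γ⁻¹(z − prox_{γφ}(z))` is Lipschitz
continuous with constant `L_F = (L + 2/γ)/(1 − γρ)`. -/
theorem normal_map_lipschitz
    {p : ℕ} (hp : 1 ≤ p) (ρ γ L : ℝ) (hρ : 0 ≤ ρ) (hγ : 0 < γ) (hγρ : γ * ρ < 1)
    (hL : 0 ≤ L)
    (φ : EuclideanSpace ℝ (Fin p) → ℝ)
    (hφlsc : LowerSemicontinuous φ)
    (hφwc : ConvexOn ℝ Set.univ (fun y => φ y + ρ / 2 * ‖y‖ ^ 2))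
    (prox : EuclideanSpace ℝ (Fin p) → EuclideanSpace ℝ (Fin p))
    (hprox : ∀ z, IsMinOn (fun y => φ y + ‖y - z‖ ^ 2 / (2 * γ)) Set.univ (prox z))
    (hproxUnique : ∀ z u,
      IsMinOn (fun y => φ y + ‖y - z‖ ^ 2 / (2 * γ)) Set.univ u → u = prox z)
    (f : EuclideanSpace ℝ (Fin p) → ℝ)
    (f' : EuclideanSpace ℝ (Fin p) → EuclideanSpace ℝ (Fin p))
    (hf : ∀ x, HasGradientAt f (f' x) x)
    (hlip : ∀ x y, ‖f' x - f' y‖ ≤ L * ‖x - y‖)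
    (Fnor : EuclideanSpace ℝ (Fin p) → EuclideanSpace ℝ (Fin p))
    (hFnor : ∀ z, Fnor z = f' (prox z) + γ⁻¹ • (z - prox z)) :
    ∀ z z', ‖Fnor z - Fnor z'‖ ≤ (L + 2 / γ) / (1 - γ * ρ) * ‖z - z'‖ := by
  have hν : (0:ℝ) < 1 - γ * ρ := by linarith
  have h2γ : (0:ℝ) < 2 * γ := by linarith
  have h2γ0 : (2:ℝ) * γ ≠ 0 := ne_of_gt h2γ
  -- Strong convexity of the prox objective (multiplied through by 2γ).
  have strong : ∀ z y, 2*γ*(φ (prox z)) + ‖prox z - z‖^2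
      + (1 - γ*ρ) * ‖y - prox z‖^2 ≤ 2*γ*(φ y) + ‖y - z‖^2 := by
    intro z y
    set c : ℝ := (1 - γ*ρ) * ‖y - prox z‖^2 with hc
    set D : ℝ := (2*γ*(φ y) + ‖y - z‖^2) - (2*γ*(φ (prox z)) + ‖prox z - z‖^2) with hD
    have hc0 : 0 ≤ c := by positivity
    -- key: for every t ∈ (0,1), c * (1-t) ≤ D
    have key : ∀ t : ℝ, 0 < t → t < 1 → c * (1 - t) ≤ D := by
      intro t ht0 ht1
      have hconv := hφwc.2 (Set.mem_univ (prox z)) (Set.mem_univ y)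
        (by linarith : (0:ℝ) ≤ 1 - t) (le_of_lt ht0) (by ring)
      simp only [smul_eq_mul] at hconv
      have hconv2 := mul_le_mul_of_nonneg_left hconv (le_of_lt h2γ)
      have hmin := isMinOn_iff.mp (hprox z) ((1-t)•(prox z) + t•y) (Set.mem_univ _)
      have hmin2 := mul_le_mul_of_nonneg_left hmin (le_of_lt h2γ)
      rw [mul_add, mul_add, mul_div_cancel₀ _ h2γ0, mul_div_cancel₀ _ h2γ0] at hmin2
      have h1 : ‖(1-t)•(prox z) + t•y‖^2
          = (1-t)*‖prox z‖^2 + t*‖y‖^2 - t*(1-t)*‖prox z - y‖^2 := combo_norm_sq _ y t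
      have h2 : ‖((1-t)•(prox z) + t•y) - z‖^2
          = (1-t)*‖prox z - z‖^2 + t*‖y - z‖^2 - t*(1-t)*‖prox z - y‖^2 := by
        have he : ((1-t)•(prox z) + t•y) - z = (1-t)•(prox z - z) + t•(y - z) := by module
        rw [he, combo_norm_sq]
        congr 3
        rw [show (prox z - z) - (y - z) = prox z - y by abel]
      have hny : ‖prox z - y‖ = ‖y - prox z‖ := norm_sub_rev _ _
      rw [hc, hD, ← hny]
      nlinarith [hmin2, hconv2, h1, h2, ht0, mul_pos ht0 (sub_pos.mpr ht1),
        sq_nonneg ‖prox z - y‖]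
    -- pass to the limit t → 0
    have hcD : c ≤ D := by
      by_contra h
      push_neg at h
      have hD0 : 0 ≤ D := by nlinarith [key (1/2) (by norm_num) (by norm_num)]
      have hcpos : 0 < c := lt_of_le_of_lt hD0 h
      have ht := key ((1 - D/c)/2)
        (by
          have : D/c < 1 := (div_lt_one hcpos).mpr h
          linarith)
        (by
          have : 0 ≤ D/c := div_nonneg hD0 hc0
          linarith)
      have heq : c * (1 - (1 - D/c)/2) = (c + D)/2 := by
        field_simp
        ring
      rw [heq] at ht
      linarith
    rw [hc, hD] at hcD
    linarith
  -- Lipschitz continuity of prox with constant 1/(1-γρ)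
  have proxlip : ∀ z z', ‖prox z - prox z'‖ ≤ ‖z - z'‖ / (1 - γ * ρ) := by
    intro z z'
    have h1 := strong z (prox z')
    have h2 := strong z' (prox z)
    have hsymsq : ‖prox z - prox z'‖^2 = ‖prox z' - prox z‖^2 := by
      rw [norm_sub_rev]
    have hie := inner_expand (prox z) (prox z') z z'
    have hcs := real_inner_le_norm (prox z' - prox z) (z' - z)
    rw [hsymsq] at h2
    have hkey : (1 - γ*ρ) * ‖prox z' - prox z‖^2 ≤ ‖prox z' - prox z‖ * ‖z' - z‖ := by
      linarith [h1, h2, hie, hcs]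
    rw [norm_sub_rev, show ‖z - z'‖ = ‖z' - z‖ from norm_sub_rev z z', le_div_iff₀ hν]
    rcases eq_or_lt_of_le (norm_nonneg (prox z' - prox z)) with h0 | h0
    · rw [← h0, zero_mul]
      exact norm_nonneg _
    · nlinarith [hkey, h0]
  -- Final bound
  intro z z'
  have hd := proxlip z z'
  have hsplit : Fnor z - Fnor z'
      = (f' (prox z) - f' (prox z')) + γ⁻¹ • ((z - z') - (prox z - prox z')) := by
    rw [hFnor z, hFnor z']
    module
  have hb : ‖Fnor z - Fnor z'‖
      ≤ L * ‖prox z - prox z'‖ + γ⁻¹ * (‖z - z'‖ + ‖prox z - prox z'‖) := by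
    rw [hsplit]
    refine le_trans (norm_add_le _ _) ?_
    gcongr
    · exact hlip _ _
    · rw [norm_smul, Real.norm_eq_abs, abs_of_pos (inv_pos.mpr hγ)]
      gcongr
      exact norm_sub_le _ _
  refine le_trans hb ?_
  rw [le_div_iff₀ hν] at hd
  have hK : (0:ℝ) ≤ ‖z - z'‖ := norm_nonneg _
  have hU : (0:ℝ) ≤ ‖prox z - prox z'‖ := norm_nonneg _
  have hiγ : (0:ℝ) ≤ γ⁻¹ := (inv_pos.mpr hγ).le
  have t1 : L * (‖prox z - prox z'‖ * (1 - γ*ρ)) ≤ L * ‖z - z'‖ :=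
    mul_le_mul_of_nonneg_left hd hL
  have t2 : γ⁻¹ * (‖prox z - prox z'‖ * (1 - γ*ρ)) ≤ γ⁻¹ * ‖z - z'‖ :=
    mul_le_mul_of_nonneg_left hd hiγ
  have t3 : γ⁻¹ * (‖z - z'‖ * (1 - γ*ρ)) ≤ γ⁻¹ * ‖z - z'‖ := by
    apply mul_le_mul_of_nonneg_left _ hiγ
    nlinarith [mul_nonneg (mul_nonneg hγ.le hρ) hK]
  rw [div_mul_eq_mul_div, le_div_iff₀ hν, div_eq_mul_inv]
  have hγγ : γ * γ⁻¹ = 1 := mul_inv_cancel₀ (ne_of_gt hγ)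
  nlinarith [t1, t2, t3, hγγ, mul_nonneg hiγ hK]
end

section
/- (Second prox theorem for weakly convex functions.) If u is a proximal point of φ at z with parameter γ, then the vector γ^{-1}(z − u) is a ρ-weak subgradient of φ at u: for every y ∈ ℝ^p, φ(y) ≥ φ(u) + ⟪γ^{-1}(z − u), y − u⟫ − (ρ/2)‖y − u‖². -/
open scoped RealInnerProductSpace
open Set Filter Topology

/-! Weak convexity of `φ` is Mathlib's `StrongConvexOn` with modulus `-ρ`. Along the segment
`u + t • (y - u)`, the minimality of `u` for the prox objective and this convexity inequality
add up, after division by `t > 0`, to the claimed inequality plus an error term linear in `t`;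
letting `t → 0⁺` removes it. -/

lemma le_of_forall_mem_Ioc_le_add_mul {a b c : ℝ} (h : ∀ t ∈ Ioc (0 : ℝ) 1, a ≤ b + t * c) :
    a ≤ b := by
  have hlim : Tendsto (fun t => b + t * c) (𝓝[>] 0) (𝓝 b) :=
    tendsto_nhdsWithin_of_tendsto_nhds ((continuous_const.add
      (continuous_id.mul continuous_const)).tendsto' 0 b (by simp))
  exact ge_of_tendsto hlim (eventually_of_mem (Ioc_mem_nhdsGT one_pos) h)

section InnerProductSpace

variable {E : Type*} [NormedAddCommGroup E] [InnerProductSpace ℝ E]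

lemma strongConvexOn_neg_iff_convexOn_add_sq_norm {s : Set E} {ρ : ℝ} {φ : E → ℝ} :
    StrongConvexOn s (-ρ) φ ↔ ConvexOn ℝ s fun y => φ y + ρ / 2 * ‖y‖ ^ 2 := by
  rw [strongConvexOn_iff_convex]
  simp only [neg_div, neg_mul, sub_neg_eq_add]

lemma StrongConvexOn.apply_add_smul_sub_le {s : Set E} {m : ℝ} {φ : E → ℝ}
    (hφ : StrongConvexOn s m φ) {x y : E} (hx : x ∈ s) (hy : y ∈ s) {t : ℝ} (ht₀ : 0 ≤ t)
    (ht₁ : t ≤ 1) :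
    φ (x + t • (y - x)) ≤ (1 - t) * φ x + t * φ y - m / 2 * t * (1 - t) * ‖y - x‖ ^ 2 := by
  have h := hφ.2 hy hx ht₀ (sub_nonneg.2 ht₁) (add_sub_cancel t 1)
  rw [show x + t • (y - x) = t • y + (1 - t) • x by module]
  simp only [smul_eq_mul] at h
  linarith

lemma IsMinOn.apply_le_apply_add_smul_of_prox {φ : E → ℝ} {γ : ℝ} {z u : E}
    (hu : IsMinOn (fun y => φ y + ‖y - z‖ ^ 2 / (2 * γ)) univ u) (d : E) (t : ℝ) :
    φ u ≤ φ (u + t • d) + t * (⟪u - z, d⟫ / γ + t * ‖d‖ ^ 2 / (2 * γ)) := by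
  have h : φ u + ‖u - z‖ ^ 2 / (2 * γ) ≤ φ (u + t • d) + ‖u + t • d - z‖ ^ 2 / (2 * γ) :=
    hu (mem_univ _)
  rw [show u + t • d - z = (u - z) + t • d by abel, norm_add_sq_real, real_inner_smul_right,
    norm_smul, Real.norm_eq_abs, mul_pow, sq_abs] at h
  have : (‖u - z‖ ^ 2 + 2 * (t * ⟪u - z, d⟫) + t ^ 2 * ‖d‖ ^ 2) / (2 * γ)
      = ‖u - z‖ ^ 2 / (2 * γ) + t * (⟪u - z, d⟫ / γ + t * ‖d‖ ^ 2 / (2 * γ)) := by ring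
  linarith

theorem le_add_inner_sub_of_isMinOn_prox {φ : E → ℝ} {ρ γ : ℝ}
    (hφ : ConvexOn ℝ univ fun y => φ y + ρ / 2 * ‖y‖ ^ 2) {z u : E}
    (hu : IsMinOn (fun y => φ y + ‖y - z‖ ^ 2 / (2 * γ)) univ u) (y : E) :
    φ u + ⟪γ⁻¹ • (z - u), y - u⟫ - ρ / 2 * ‖y - u‖ ^ 2 ≤ φ y := by
  have hφ' := strongConvexOn_neg_iff_convexOn_add_sq_norm.2 hφ
  have hinner : ⟪γ⁻¹ • (z - u), y - u⟫ = -(⟪u - z, y - u⟫ / γ) := by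
    rw [real_inner_smul_left, ← neg_sub u z, inner_neg_left]
    ring
  rw [hinner, ← sub_nonneg]
  refine le_of_forall_mem_Ioc_le_add_mul (c := ‖y - u‖ ^ 2 / (2 * γ) - ρ / 2 * ‖y - u‖ ^ 2)
    fun t ⟨ht₀, ht₁⟩ => le_of_mul_le_mul_left ?_ ht₀
  have hconv := hφ'.apply_add_smul_sub_le (mem_univ u) (mem_univ y) ht₀.le ht₁
  have hprox := hu.apply_le_apply_add_smul_of_prox (y - u) t
  linear_combination hconv + hprox

end InnerProductSpace

theorem second_prox_theorem_weakly_convex_general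
    {p : ℕ} (ρ γ : ℝ)
    (φ : EuclideanSpace ℝ (Fin p) → ℝ)
    (hφwc : ConvexOn ℝ Set.univ (fun y => φ y + ρ / 2 * ‖y‖ ^ 2))
    (z u : EuclideanSpace ℝ (Fin p))
    (hu : IsMinOn (fun y => φ y + ‖y - z‖ ^ 2 / (2 * γ)) Set.univ u) :
    ∀ y : EuclideanSpace ℝ (Fin p),
      φ y ≥ φ u + ⟪γ⁻¹ • (z - u), y - u⟫ - ρ / 2 * ‖y - u‖ ^ 2 :=
  le_add_inner_sub_of_isMinOn_prox hφwc hu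

/-- Second prox theorem for weakly convex functions: if `u` is a proximal point of `φ` at `z`
with parameter `γ`, then `γ⁻¹(z − u)` is a `ρ`-weak subgradient of `φ` at `u`. -/
theorem second_prox_theorem_weakly_convex
    {p : ℕ} (hp : 1 ≤ p) (ρ γ : ℝ) (hρ : 0 ≤ ρ) (hγ : 0 < γ) (hγρ : γ * ρ < 1)
    (φ : EuclideanSpace ℝ (Fin p) → ℝ)
    (hφlsc : LowerSemicontinuous φ)
    (hφwc : ConvexOn ℝ Set.univ (fun y => φ y + ρ / 2 * ‖y‖ ^ 2))
    (z u : EuclideanSpace ℝ (Fin p))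
    (hu : IsMinOn (fun y => φ y + ‖y - z‖ ^ 2 / (2 * γ)) Set.univ u) :
    ∀ y : EuclideanSpace ℝ (Fin p),
      φ y ≥ φ u + ⟪γ⁻¹ • (z - u), y - u⟫ - ρ / 2 * ‖y - u‖ ^ 2 :=
  second_prox_theorem_weakly_convex_general ρ γ φ hφwc z u hu
end

section
/- For every z ∈ ℝ^p, the normal map value F^nor(z) is a (ρ + L)-weak subgradient of ψ at x := prox_{γφ}(z); that is, for every y ∈ ℝ^p, ψ(y) ≥ ψ(x) + ⟪F^nor(z), y − x⟫ − ((ρ + L)/2)‖y − x‖². (This is the precise sense in which F^nor(z) ∈ ∂ψ(prox_{γφ}(z)).) -/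
/-!
Split `ψ = f + φ` at `x = prox_{γφ}(z)`. The smooth part obeys the usual quadratic lower bound
`f y ≥ f x + ⟪∇f x, y - x⟫ - L/2 ‖y - x‖²`. For the nonsmooth part, write the prox objective as
the convex function `φ + ρ/2 ‖·‖²` plus the smooth function `‖· - z‖²/(2γ) - ρ/2 ‖·‖²`: at a
minimizer, minus the gradient of the smooth summand is a subgradient of the convex one, which
says `φ y ≥ φ x - γ⁻¹ ⟪x - z, y - x⟫ - ρ/2 ‖y - x‖²`. Adding the two bounds gives the claim,
since `F^nor(z) = ∇f x - γ⁻¹ (x - z)`.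
-/

open scoped RealInnerProductSpace
open Set

theorem norm_sub_sub_fderiv_le_of_lipschitz {E F : Type*} [NormedAddCommGroup E]
    [NormedSpace ℝ E] [NormedAddCommGroup F] [NormedSpace ℝ F]
    {f : E → F} {f' : E → E →L[ℝ] F} {L : ℝ}
    (hf : ∀ u, HasFDerivAt f (f' u) u) (hf' : ∀ u v, ‖f' u - f' v‖ ≤ L * ‖u - v‖) (x y : E) :
    ‖f y - f x - f' x (y - x)‖ ≤ L / 2 * ‖y - x‖ ^ 2 := by
  set v := y - x
  set h : ℝ → F := fun t => f (x + t • v) - f x - t • f' x v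
  have hline : ∀ t : ℝ, HasDerivAt (fun s : ℝ => x + s • v) v t := fun t => by
    simpa using ((hasDerivAt_id t).smul_const v).const_add x
  have hderiv : ∀ t : ℝ, HasDerivAt h ((f' (x + t • v) - f' x) v) t := fun t => by
    refine ((((hf _).comp_hasDerivAt t (hline t)).sub_const (f x)).sub
      ((hasDerivAt_id t).smul_const (f' x v))).congr_deriv ?_
    simp
  have hbound : ∀ t ∈ Ico (0 : ℝ) 1, ‖(f' (x + t • v) - f' x) v‖ ≤ L * ‖v‖ ^ 2 * t := by
    rintro t ⟨ht, -⟩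
    calc ‖(f' (x + t • v) - f' x) v‖ ≤ ‖f' (x + t • v) - f' x‖ * ‖v‖ :=
          ContinuousLinearMap.le_opNorm _ _
      _ ≤ L * ‖t • v‖ * ‖v‖ := by
          gcongr
          simpa using hf' (x + t • v) x
      _ = L * ‖v‖ ^ 2 * t := by
          rw [norm_smul, Real.norm_of_nonneg ht]; ring
  have hB : ∀ t : ℝ, HasDerivAt (fun s : ℝ => L / 2 * ‖v‖ ^ 2 * s ^ 2) (L * ‖v‖ ^ 2 * t) t :=
    fun t => ((hasDerivAt_pow 2 t).const_mul (L / 2 * ‖v‖ ^ 2)).congr_deriv (by ring)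
  have := image_norm_le_of_norm_deriv_right_le_deriv_boundary
    (fun t _ => (hderiv t).continuousAt.continuousWithinAt)
    (fun t _ => (hderiv t).hasDerivWithinAt) (by simp [h]) hB hbound
    (right_mem_Icc.2 zero_le_one)
  simpa [h, v] using this

theorem ConvexOn.sub_le_of_isMinOn_add {E : Type*} [NormedAddCommGroup E] [NormedSpace ℝ E]
    {s : Set E} {g q : E → ℝ} {q' : E →L[ℝ] ℝ} {x y : E}
    (hg : ConvexOn ℝ s g) (hq : HasFDerivAt q q' x) (hmin : IsMinOn (g + q) s x)
    (hx : x ∈ s) (hy : y ∈ s) : g x - q' (y - x) ≤ g y := by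
  suffices g x - g y ≤ q' (y - x) by linarith
  refine ge_of_tendsto (hq.hasLineDerivAt (y - x)).tendsto_slope_zero_right ?_
  filter_upwards [Ioo_mem_nhdsGT one_pos] with t ⟨ht0, ht1⟩
  have hseg : x + t • (y - x) = (1 - t) • x + t • y := by module
  have ht1' : 0 ≤ 1 - t := by linarith
  have hconv := hg.2 hx hy ht1' ht0.le (sub_add_cancel 1 t)
  have hmin_t := isMinOn_iff.mp hmin _ (hseg ▸ hg.1 hx hy ht1' ht0.le (sub_add_cancel 1 t))
  rw [← hseg] at hconv
  rw [smul_eq_mul, le_inv_mul_iff₀ ht0]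
  simp only [Pi.add_apply, smul_eq_mul] at hmin_t hconv
  linarith

section InnerProductSpace

variable {E : Type*} [NormedAddCommGroup E] [InnerProductSpace ℝ E]

theorem add_inner_sub_sq_le_of_lipschitz_gradient [CompleteSpace E] {f : E → ℝ} {f' : E → E}
    {L : ℝ} (hf : ∀ u, HasGradientAt f (f' u) u) (hf' : ∀ u v, ‖f' u - f' v‖ ≤ L * ‖u - v‖)
    (x y : E) : f x + ⟪f' x, y - x⟫ - L / 2 * ‖y - x‖ ^ 2 ≤ f y := by
  have hdual : ∀ u v, ‖InnerProductSpace.toDual ℝ E (f' u) - InnerProductSpace.toDual ℝ E (f' v)‖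
      ≤ L * ‖u - v‖ := fun u v => by
    rw [← map_sub, LinearIsometryEquiv.norm_map]; exact hf' u v
  have := norm_sub_sub_fderiv_le_of_lipschitz (fun u => (hf u).hasFDerivAt) hdual x y
  rw [Real.norm_eq_abs, InnerProductSpace.toDual_apply_apply] at this
  linarith [(abs_le.1 this).1]

theorem IsMinOn.le_of_convexOn_add_sq_norm {φ : E → ℝ} {ρ γ : ℝ} {z x : E}
    (hφ : ConvexOn ℝ univ (fun y => φ y + ρ / 2 * ‖y‖ ^ 2))
    (hx : IsMinOn (fun y => φ y + ‖y - z‖ ^ 2 / (2 * γ)) univ x) (y : E) :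
    φ x ≤ φ y + ρ / 2 * ‖y - x‖ ^ 2 + γ⁻¹ * ⟪x - z, y - x⟫ := by
  have hq : HasFDerivAt (fun y => ‖y - z‖ ^ 2 * (2 * γ)⁻¹ - ρ / 2 * ‖y‖ ^ 2) _ x :=
    (HasFDerivAt.mul_const (HasFDerivAt.norm_sq ((hasFDerivAt_id x).sub_const z)) _).sub
      (HasFDerivAt.const_mul (hasStrictFDerivAt_norm_sq x).hasFDerivAt (ρ / 2))
  have hsplit : (fun y => φ y + ρ / 2 * ‖y‖ ^ 2) +
      (fun y => ‖y - z‖ ^ 2 * (2 * γ)⁻¹ - ρ / 2 * ‖y‖ ^ 2) =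
      fun y => φ y + ‖y - z‖ ^ 2 / (2 * γ) := by
    ext y; simp only [Pi.add_apply]; ring
  have hsub := hφ.sub_le_of_isMinOn_add hq (hsplit ▸ hx) (mem_univ x) (mem_univ y)
  simp only [id_eq, ContinuousLinearMap.comp_id, sub_apply, smul_apply, innerSL_apply_apply,
    nsmul_eq_mul, Nat.cast_ofNat, smul_eq_mul] at hsub
  have hexpand : ‖y - x‖ ^ 2 = ‖y‖ ^ 2 - 2 * ⟪x, y - x⟫ - ‖x‖ ^ 2 := by
    rw [norm_sub_sq_real, inner_sub_right, real_inner_self_eq_norm_sq, real_inner_comm]; ring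
  rw [hexpand]
  linear_combination hsub

end InnerProductSpace

theorem normal_map_weak_subgradient_general
    {p : ℕ} (ρ γ L : ℝ)
    (φ : EuclideanSpace ℝ (Fin p) → ℝ)
    (hφwc : ConvexOn ℝ Set.univ (fun y => φ y + ρ / 2 * ‖y‖ ^ 2))
    (prox : EuclideanSpace ℝ (Fin p) → EuclideanSpace ℝ (Fin p))
    (hprox : ∀ z, IsMinOn (fun y => φ y + ‖y - z‖ ^ 2 / (2 * γ)) Set.univ (prox z))
    (f : EuclideanSpace ℝ (Fin p) → ℝ)
    (f' : EuclideanSpace ℝ (Fin p) → EuclideanSpace ℝ (Fin p))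
    (hf : ∀ x, HasGradientAt f (f' x) x)
    (hlip : ∀ x y, ‖f' x - f' y‖ ≤ L * ‖x - y‖)
    (ψ : EuclideanSpace ℝ (Fin p) → ℝ) (hψ : ∀ x, ψ x = f x + φ x)
    (Fnor : EuclideanSpace ℝ (Fin p) → EuclideanSpace ℝ (Fin p))
    (hFnor : ∀ z, Fnor z = f' (prox z) + γ⁻¹ • (z - prox z)) :
    ∀ z y : EuclideanSpace ℝ (Fin p),
      ψ y ≥ ψ (prox z) + ⟪Fnor z, y - prox z⟫ - (ρ + L) / 2 * ‖y - prox z‖ ^ 2 := by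
  intro z y
  have hφ := (hprox z).le_of_convexOn_add_sq_norm hφwc y
  have hf_lower := add_inner_sub_sq_le_of_lipschitz_gradient hf hlip (prox z) y
  have hFnor_inner : ⟪Fnor z, y - prox z⟫ =
      ⟪f' (prox z), y - prox z⟫ - γ⁻¹ * ⟪prox z - z, y - prox z⟫ := by
    rw [hFnor, inner_add_left, real_inner_smul_left, ← neg_sub (prox z) z, inner_neg_left]; ring
  rw [hψ, hψ, hFnor_inner]
  linarith

/-- For every `z`, the normal map value `F^nor(z)` is a `(ρ + L)`-weak subgradient of
`ψ = f + φ` at `x = prox_{γφ}(z)`. -/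
theorem normal_map_weak_subgradient
    {p : ℕ} (hp : 1 ≤ p) (ρ γ L : ℝ) (hρ : 0 ≤ ρ) (hγ : 0 < γ) (hγρ : γ * ρ < 1)
    (hL : 0 ≤ L)
    (φ : EuclideanSpace ℝ (Fin p) → ℝ)
    (hφlsc : LowerSemicontinuous φ)
    (hφwc : ConvexOn ℝ Set.univ (fun y => φ y + ρ / 2 * ‖y‖ ^ 2))
    (prox : EuclideanSpace ℝ (Fin p) → EuclideanSpace ℝ (Fin p))
    (hprox : ∀ z, IsMinOn (fun y => φ y + ‖y - z‖ ^ 2 / (2 * γ)) Set.univ (prox z))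
    (hproxUnique : ∀ z u,
      IsMinOn (fun y => φ y + ‖y - z‖ ^ 2 / (2 * γ)) Set.univ u → u = prox z)
    (f : EuclideanSpace ℝ (Fin p) → ℝ)
    (f' : EuclideanSpace ℝ (Fin p) → EuclideanSpace ℝ (Fin p))
    (hf : ∀ x, HasGradientAt f (f' x) x)
    (hlip : ∀ x y, ‖f' x - f' y‖ ≤ L * ‖x - y‖)
    (ψ : EuclideanSpace ℝ (Fin p) → ℝ) (hψ : ∀ x, ψ x = f x + φ x)
    (Fnor : EuclideanSpace ℝ (Fin p) → EuclideanSpace ℝ (Fin p))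
    (hFnor : ∀ z, Fnor z = f' (prox z) + γ⁻¹ • (z - prox z)) :
    ∀ z y : EuclideanSpace ℝ (Fin p),
      ψ y ≥ ψ (prox z) + ⟪Fnor z, y - prox z⟫ - (ρ + L) / 2 * ‖y - prox z‖ ^ 2 :=
  normal_map_weak_subgradient_general ρ γ L φ hφwc prox hprox f f' hf hlip ψ hψ Fnor hFnor
end

section
/- (One-step composite descent inequality.) For any z₁, z₂ ∈ ℝ^p, with x₁ := prox_{γφ}(z₁) and x₂ := prox_{γφ}(z₂), one has ψ(x₂) ≤ ψ(x₁) + ⟪F^nor(z₁), x₂ − x₁⟫ + ((L + ρ)/2 − 1/γ)‖x₂ − x₁‖² + γ^{-1}⟪z₂ − z₁, x₂ − x₁⟫. -/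
open scoped RealInnerProductSpace
open Set Filter Topology

/-!
The descent lemma bounds `f(x₂)` by its quadratic model at `x₁`. For `φ`, optimality of
`x₂ = prox_{γφ}(z₂)` makes `γ⁻¹ (z₂ - x₂)` a subgradient of `φ` at `x₂` up to the weak-convexity
defect `ρ/2 ‖x₂ - x₁‖²`. Adding the two bounds and writing
`z₂ - x₂ = (z₁ - x₁) + (z₂ - z₁) - (x₂ - x₁)` produces the normal map at `z₁`.
-/

variable {E : Type*} [NormedAddCommGroup E] [InnerProductSpace ℝ E]

theorem HasGradientAt.hasDerivAt_comp_add_smul [CompleteSpace E] {f : E → ℝ} {g x d : E} {t : ℝ}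
    (hf : HasGradientAt f g (x + t • d)) : HasDerivAt (fun s : ℝ => f (x + s • d)) ⟪g, d⟫ t := by
  have hline : HasDerivAt (fun s : ℝ => x + s • d) d t := by
    simpa using ((hasDerivAt_id t).smul_const d).const_add x
  exact hf.hasFDerivAt.comp_hasDerivAt t hline

theorem le_add_inner_add_of_lipschitz_gradient [CompleteSpace E] {f : E → ℝ} {f' : E → E}
    {L : ℝ} (hf : ∀ x, HasGradientAt f (f' x) x) (hlip : ∀ x y, ‖f' x - f' y‖ ≤ L * ‖x - y‖)
    (x y : E) : f y ≤ f x + ⟪f' x, y - x⟫ + L / 2 * ‖y - x‖ ^ 2 := by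
  set d := y - x
  let g : ℝ → ℝ := fun t => f (x + t • d) - t * ⟪f' x, d⟫ - L / 2 * t ^ 2 * ‖d‖ ^ 2
  have hg (t : ℝ) : HasDerivAt g (⟪f' (x + t • d) - f' x, d⟫ - L * t * ‖d‖ ^ 2) t := by
    refine ((((hf (x + t • d)).hasDerivAt_comp_add_smul).sub
      ((hasDerivAt_id t).mul_const ⟪f' x, d⟫)).sub
      (((hasDerivAt_pow 2 t).const_mul (L / 2)).mul_const (‖d‖ ^ 2))).congr_deriv ?_
    rw [inner_sub_left]
    ring
  have hanti : AntitoneOn g (Ici 0) := by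
    refine antitoneOn_of_hasDerivWithinAt_nonpos (convex_Ici 0)
      (fun t _ => (hg t).continuousAt.continuousWithinAt) (fun t _ => (hg t).hasDerivWithinAt)
      fun t ht => ?_
    rw [interior_Ici] at ht
    have : ⟪f' (x + t • d) - f' x, d⟫ ≤ L * t * ‖d‖ ^ 2 :=
      calc ⟪f' (x + t • d) - f' x, d⟫ ≤ ‖f' (x + t • d) - f' x‖ * ‖d‖ := real_inner_le_norm _ _
        _ ≤ L * ‖t • d‖ * ‖d‖ := by gcongr; simpa using hlip (x + t • d) x
        _ = L * t * ‖d‖ ^ 2 := by rw [norm_smul, Real.norm_of_nonneg (le_of_lt ht)]; ring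
    linarith
  have hg_one_le : g 1 ≤ g 0 := hanti (mem_Ici.2 le_rfl) (mem_Ici.2 zero_le_one) zero_le_one
  simp only [g, one_smul, d, add_sub_cancel, zero_smul, add_zero] at hg_one_le
  linarith

theorem ConvexOn.isMinOn_of_isMinOn_add_sq_norm_sub {G : E → ℝ} (hG : ConvexOn ℝ univ G) {x : E}
    {c : ℝ} (hx : IsMinOn (fun y => G y + c * ‖y - x‖ ^ 2) univ x) : IsMinOn G univ x := by
  intro y _
  show G x ≤ G y
  -- Comparing `x` with the points of the segment `[x, y]`; then let `t → 0`.
  have hslope : ∀ t ∈ Ioc (0 : ℝ) 1, G x - G y ≤ t * (c * ‖y - x‖ ^ 2) := by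
    rintro t ⟨ht0, ht1⟩
    have hmin := hx (mem_univ (x + t • (y - x)))
    have hconv := hG.2 (mem_univ x) (mem_univ y) (sub_nonneg.2 ht1) ht0.le (sub_add_cancel 1 t)
    have hpt : (1 - t) • x + t • y = x + t • (y - x) := by module
    simp only [mem_ofPred_eq, sub_self, norm_zero, add_sub_cancel_left, norm_smul,
      Real.norm_of_nonneg ht0.le] at hmin
    rw [hpt, smul_eq_mul, smul_eq_mul] at hconv
    nlinarith
  have hlim : Tendsto (fun t : ℝ => t * (c * ‖y - x‖ ^ 2)) (𝓝[>] 0) (𝓝 0) :=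
    ((continuous_mul_const _).tendsto' 0 0 (zero_mul _)).mono_left nhdsWithin_le_nhds
  have := ge_of_tendsto hlim (eventually_of_mem (Ioc_mem_nhdsGT zero_lt_one) hslope)
  linarith

theorem ConvexOn.le_add_inner_add_of_isMinOn_prox {φ : E → ℝ} {ρ γ : ℝ}
    (hφ : ConvexOn ℝ univ (fun y => φ y + ρ / 2 * ‖y‖ ^ 2)) {x z : E}
    (hx : IsMinOn (fun y => φ y + ‖y - z‖ ^ 2 / (2 * γ)) univ x) (y : E) :
    φ x ≤ φ y + γ⁻¹ * ⟪z - x, x - y⟫ + ρ / 2 * ‖x - y‖ ^ 2 := by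
  -- `G` is `φ + ρ/2 ‖·‖²` plus an affine function, and `G + (γ⁻¹/2 - ρ/2) ‖· - x‖²` is the
  -- prox objective minus a constant.
  set G : E → ℝ := fun y => φ y + ρ / 2 * ‖y - x‖ ^ 2 - γ⁻¹ * ⟪z - x, y⟫
  have hG : ConvexOn ℝ univ G := by
    refine (hφ.add (((innerSL ℝ (-(ρ • x + γ⁻¹ • (z - x)))).toLinearMap.convexOn
      convex_univ).add_const (ρ / 2 * ‖x‖ ^ 2))).congr fun y _ => ?_
    simp only [G, Pi.add_apply, norm_sub_sq_real, ContinuousLinearMap.coe_coe,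
      innerSL_apply_apply, inner_neg_left, inner_add_left, real_inner_smul_left,
      real_inner_comm x y]
    ring
  have hGx : IsMinOn (fun y => G y + (γ⁻¹ / 2 - ρ / 2) * ‖y - x‖ ^ 2) univ x := by
    intro w _
    have hsq (y : E) : ‖y - z‖ ^ 2 = ‖y - x‖ ^ 2 - 2 * ⟪y - x, z - x⟫ + ‖z - x‖ ^ 2 := by
      rw [← norm_sub_sq_real, sub_sub_sub_cancel_right]
    have := hx (mem_univ w)
    simp only [mem_ofPred_eq, hsq, sub_self, norm_zero, inner_zero_left] at this
    rw [real_inner_comm, inner_sub_right] at this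
    simp only [mem_ofPred_eq, G, sub_self, norm_zero]
    linear_combination this
  have := hG.isMinOn_of_isMinOn_add_sq_norm_sub hGx (mem_univ y)
  simp only [mem_ofPred_eq, G, sub_self, norm_zero] at this
  rw [inner_sub_right, norm_sub_rev]
  linear_combination this

theorem composite_one_step_descent_general
    {p : ℕ} (ρ γ L : ℝ)
    (φ : EuclideanSpace ℝ (Fin p) → ℝ)
    (hφwc : ConvexOn ℝ Set.univ (fun y => φ y + ρ / 2 * ‖y‖ ^ 2))
    (prox : EuclideanSpace ℝ (Fin p) → EuclideanSpace ℝ (Fin p))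
    (hprox : ∀ z, IsMinOn (fun y => φ y + ‖y - z‖ ^ 2 / (2 * γ)) Set.univ (prox z))
    (f : EuclideanSpace ℝ (Fin p) → ℝ)
    (f' : EuclideanSpace ℝ (Fin p) → EuclideanSpace ℝ (Fin p))
    (hf : ∀ x, HasGradientAt f (f' x) x)
    (hlip : ∀ x y, ‖f' x - f' y‖ ≤ L * ‖x - y‖)
    (ψ : EuclideanSpace ℝ (Fin p) → ℝ) (hψ : ∀ x, ψ x = f x + φ x)
    (Fnor : EuclideanSpace ℝ (Fin p) → EuclideanSpace ℝ (Fin p))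
    (hFnor : ∀ z, Fnor z = f' (prox z) + γ⁻¹ • (z - prox z)) :
    ∀ z₁ z₂ : EuclideanSpace ℝ (Fin p),
      ψ (prox z₂) ≤ ψ (prox z₁) + ⟪Fnor z₁, prox z₂ - prox z₁⟫
        + ((L + ρ) / 2 - 1 / γ) * ‖prox z₂ - prox z₁‖ ^ 2
        + γ⁻¹ * ⟪z₂ - z₁, prox z₂ - prox z₁⟫ := by
  intro z₁ z₂
  set x₁ := prox z₁
  set x₂ := prox z₂
  have hf_descent := le_add_inner_add_of_lipschitz_gradient hf hlip x₁ x₂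
  have hφ_prox := hφwc.le_add_inner_add_of_isMinOn_prox (hprox z₂) x₁
  have hsplit : z₂ - x₂ = (z₁ - x₁) + (z₂ - z₁) - (x₂ - x₁) := by abel
  rw [hsplit, inner_sub_left, inner_add_left, real_inner_self_eq_norm_sq] at hφ_prox
  rw [hψ, hψ, hFnor, inner_add_left, real_inner_smul_left, one_div]
  linear_combination hf_descent + hφ_prox

/-- One-step composite descent inequality: for any `z₁, z₂` with `x₁ = prox_{γφ}(z₁)` and
`x₂ = prox_{γφ}(z₂)`,
`ψ(x₂) ≤ ψ(x₁) + ⟪F^nor(z₁), x₂ − x₁⟫ + ((L + ρ)/2 − 1/γ)‖x₂ − x₁‖² + γ⁻¹⟪z₂ − z₁, x₂ − x₁⟫`. -/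
theorem composite_one_step_descent
    {p : ℕ} (hp : 1 ≤ p) (ρ γ L : ℝ) (hρ : 0 ≤ ρ) (hγ : 0 < γ) (hγρ : γ * ρ < 1)
    (hL : 0 ≤ L)
    (φ : EuclideanSpace ℝ (Fin p) → ℝ)
    (hφlsc : LowerSemicontinuous φ)
    (hφwc : ConvexOn ℝ Set.univ (fun y => φ y + ρ / 2 * ‖y‖ ^ 2))
    (prox : EuclideanSpace ℝ (Fin p) → EuclideanSpace ℝ (Fin p))
    (hprox : ∀ z, IsMinOn (fun y => φ y + ‖y - z‖ ^ 2 / (2 * γ)) Set.univ (prox z))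
    (hproxUnique : ∀ z u,
      IsMinOn (fun y => φ y + ‖y - z‖ ^ 2 / (2 * γ)) Set.univ u → u = prox z)
    (f : EuclideanSpace ℝ (Fin p) → ℝ)
    (f' : EuclideanSpace ℝ (Fin p) → EuclideanSpace ℝ (Fin p))
    (hf : ∀ x, HasGradientAt f (f' x) x)
    (hlip : ∀ x y, ‖f' x - f' y‖ ≤ L * ‖x - y‖)
    (ψ : EuclideanSpace ℝ (Fin p) → ℝ) (hψ : ∀ x, ψ x = f x + φ x)
    (Fnor : EuclideanSpace ℝ (Fin p) → EuclideanSpace ℝ (Fin p))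
    (hFnor : ∀ z, Fnor z = f' (prox z) + γ⁻¹ • (z - prox z)) :
    ∀ z₁ z₂ : EuclideanSpace ℝ (Fin p),
      ψ (prox z₂) ≤ ψ (prox z₁) + ⟪Fnor z₁, prox z₂ - prox z₁⟫
        + ((L + ρ) / 2 - 1 / γ) * ‖prox z₂ - prox z₁‖ ^ 2
        + γ⁻¹ * ⟪z₂ - z₁, prox z₂ - prox z₁⟫ :=
  composite_one_step_descent_general ρ γ L φ hφwc prox hprox f f' hf hlip ψ hψ Fnor hFnor
end

section
/- For every z ∈ ℝ^p, the natural map at the proximal point is controlled by the normal map: (1 − γρ)‖F^nat(prox_{γφ}(z))‖ ≤ ‖F^nor(z)‖, where F^nat(x) := γ^{-1}(x − prox_{γφ}(x − γ∇f(x))). -/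
/-!
The prox objective `y ↦ φ y + ‖y - z‖² / (2γ)` is `(γ⁻¹ - ρ)`-strongly convex, so its minimiser
beats every point `y` by at least `(γ⁻¹ - ρ) / 2 * ‖y - prox z‖²`. Testing `prox z` and `prox w`
against each other and adding gives `(1 - γρ)‖prox z - prox w‖² ≤ ⟪prox z - prox w, z - w⟫`,
hence `(1 - γρ)‖prox z - prox w‖ ≤ ‖z - w‖`. For `x = prox z` and `w = x - γ∇f(x)` one has
`F^nor(z) = γ⁻¹(z - w)` and `F^nat(x) = γ⁻¹(x - prox w)`.
-/

open scoped RealInnerProductSpace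
open Set Filter Topology

variable {E : Type*} [NormedAddCommGroup E]

theorem UniformConvexOn.add_le_of_isMinOn [NormedSpace ℝ E] {s : Set E} {ψ : ℝ → ℝ} {f : E → ℝ}
    {x u : E}
    (hf : UniformConvexOn s ψ f) (hx : IsMinOn f s x) (hxs : x ∈ s) (hus : u ∈ s) :
    f x + ψ ‖u - x‖ ≤ f u := by
  have hseg : ∀ t ∈ Ioo (0 : ℝ) 1, f x + (1 - t) * ψ ‖u - x‖ ≤ f u := by
    rintro t ⟨ht0, ht1⟩
    have hweights := add_sub_cancel t 1
    have hconv := hf.2 hus hxs ht0.le (sub_nonneg.2 ht1.le) hweights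
    have hmin := isMinOn_iff.1 hx _ (hf.1 hus hxs ht0.le (sub_nonneg.2 ht1.le) hweights)
    rw [smul_eq_mul, smul_eq_mul] at hconv
    refine le_of_mul_le_mul_left ?_ ht0
    linarith
  have hcont : Continuous fun t : ℝ => f x + (1 - t) * ψ ‖u - x‖ := by fun_prop
  have hlim := (hcont.tendsto' 0 (f x + ψ ‖u - x‖) (by simp)).mono_left
    (nhdsWithin_le_nhds (s := Ioi 0))
  exact le_of_tendsto hlim (eventually_of_mem (Ioo_mem_nhdsGT one_pos) hseg)

section InnerProductSpace

variable [InnerProductSpace ℝ E]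

theorem strongConvexOn_add_norm_sub_sq_div {φ : E → ℝ} {ρ : ℝ}
    (hφ : ConvexOn ℝ univ fun y => φ y + ρ / 2 * ‖y‖ ^ 2) (γ : ℝ) (z : E) :
    StrongConvexOn univ (γ⁻¹ - ρ) fun y => φ y + ‖y - z‖ ^ 2 / (2 * γ) := by
  rw [strongConvexOn_iff_convex]
  refine ((hφ.add ((innerSL ℝ (-(γ⁻¹ • z))).toLinearMap.convexOn convex_univ)).add_const
    (‖z‖ ^ 2 / (2 * γ))).congr fun y _ => ?_
  simp only [Pi.add_apply, ContinuousLinearMap.coe_coe, innerSL_apply_apply, inner_neg_left,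
    real_inner_smul_left, norm_sub_sq_real, real_inner_comm z y]
  ring

theorem mul_norm_sub_sq_le_inner_of_isMinOn {φ : E → ℝ} {ρ γ : ℝ}
    (hφ : ConvexOn ℝ univ fun y => φ y + ρ / 2 * ‖y‖ ^ 2) (hγ : 0 < γ) {z w x u : E}
    (hx : IsMinOn (fun y => φ y + ‖y - z‖ ^ 2 / (2 * γ)) univ x)
    (hu : IsMinOn (fun y => φ y + ‖y - w‖ ^ 2 / (2 * γ)) univ u) :
    (1 - γ * ρ) * ‖x - u‖ ^ 2 ≤ ⟪x - u, z - w⟫ := by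
  have hxu := (strongConvexOn_add_norm_sub_sq_div hφ γ z).add_le_of_isMinOn hx
    (mem_univ x) (mem_univ u)
  have hux := (strongConvexOn_add_norm_sub_sq_div hφ γ w).add_le_of_isMinOn hu
    (mem_univ u) (mem_univ x)
  rw [norm_sub_rev u x] at hxu
  have hpar :
      ‖u - z‖ ^ 2 + ‖x - w‖ ^ 2 - ‖x - z‖ ^ 2 - ‖u - w‖ ^ 2 = 2 * ⟪x - u, z - w⟫ := by
    simp only [norm_sub_sq_real, inner_sub_left, inner_sub_right, real_inner_comm]
    ring
  have hsum : (γ⁻¹ - ρ) * ‖x - u‖ ^ 2 ≤ γ⁻¹ * ⟪x - u, z - w⟫ := by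
    linear_combination hxu + hux + hpar / (2 * γ)
  calc (1 - γ * ρ) * ‖x - u‖ ^ 2 = γ * ((γ⁻¹ - ρ) * ‖x - u‖ ^ 2) := by field_simp
    _ ≤ γ * (γ⁻¹ * ⟪x - u, z - w⟫) := by gcongr
    _ = ⟪x - u, z - w⟫ := by field_simp

theorem mul_norm_le_norm_of_mul_norm_sq_le_inner {a : ℝ} {v d : E}
    (h : a * ‖v‖ ^ 2 ≤ ⟪v, d⟫) : a * ‖v‖ ≤ ‖d‖ := by
  rcases (norm_nonneg v).eq_or_lt with h0 | h0
  · simp [← h0]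
  · refine le_of_mul_le_mul_right ?_ h0
    calc a * ‖v‖ * ‖v‖ = a * ‖v‖ ^ 2 := by ring
      _ ≤ ‖v‖ * ‖d‖ := h.trans (real_inner_le_norm v d)
      _ = ‖d‖ * ‖v‖ := mul_comm _ _

end InnerProductSpace

theorem natural_map_le_normal_map_general
    {p : ℕ} (ρ γ : ℝ) (hγ : 0 < γ)
    (φ : EuclideanSpace ℝ (Fin p) → ℝ)
    (hφwc : ConvexOn ℝ Set.univ (fun y => φ y + ρ / 2 * ‖y‖ ^ 2))
    (prox : EuclideanSpace ℝ (Fin p) → EuclideanSpace ℝ (Fin p))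
    (hprox : ∀ z, IsMinOn (fun y => φ y + ‖y - z‖ ^ 2 / (2 * γ)) Set.univ (prox z))
    (f' : EuclideanSpace ℝ (Fin p) → EuclideanSpace ℝ (Fin p))
    (Fnor : EuclideanSpace ℝ (Fin p) → EuclideanSpace ℝ (Fin p))
    (hFnor : ∀ z, Fnor z = f' (prox z) + γ⁻¹ • (z - prox z))
    (Fnat : EuclideanSpace ℝ (Fin p) → EuclideanSpace ℝ (Fin p))
    (hFnat : ∀ x, Fnat x = γ⁻¹ • (x - prox (x - γ • f' x))) :
    ∀ z : EuclideanSpace ℝ (Fin p),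
      (1 - γ * ρ) * ‖Fnat (prox z)‖ ≤ ‖Fnor z‖ := by
  intro z
  set x := prox z
  set w := x - γ • f' x
  have hnor : Fnor z = γ⁻¹ • (z - w) := by
    rw [hFnor, smul_sub, smul_sub, smul_sub, smul_smul, inv_mul_cancel₀ hγ.ne', one_smul]
    abel
  have hprox_lip : (1 - γ * ρ) * ‖x - prox w‖ ≤ ‖z - w‖ :=
    mul_norm_le_norm_of_mul_norm_sq_le_inner
      (mul_norm_sub_sq_le_inner_of_isMinOn hφwc hγ (hprox z) (hprox w))
  rw [hFnat, hnor, norm_smul, norm_smul, mul_left_comm]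
  exact mul_le_mul_of_nonneg_left hprox_lip (norm_nonneg _)

/-- The natural map at the proximal point is controlled by the normal map:
`(1 − γρ)‖F^nat(prox_{γφ}(z))‖ ≤ ‖F^nor(z)‖`, where
`F^nat(x) = γ⁻¹(x − prox_{γφ}(x − γ∇f(x)))`. -/
theorem natural_map_le_normal_map
    {p : ℕ} (hp : 1 ≤ p) (ρ γ L : ℝ) (hρ : 0 ≤ ρ) (hγ : 0 < γ) (hγρ : γ * ρ < 1)
    (hL : 0 ≤ L)
    (φ : EuclideanSpace ℝ (Fin p) → ℝ)
    (hφlsc : LowerSemicontinuous φ)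
    (hφwc : ConvexOn ℝ Set.univ (fun y => φ y + ρ / 2 * ‖y‖ ^ 2))
    (prox : EuclideanSpace ℝ (Fin p) → EuclideanSpace ℝ (Fin p))
    (hprox : ∀ z, IsMinOn (fun y => φ y + ‖y - z‖ ^ 2 / (2 * γ)) Set.univ (prox z))
    (hproxUnique : ∀ z u,
      IsMinOn (fun y => φ y + ‖y - z‖ ^ 2 / (2 * γ)) Set.univ u → u = prox z)
    (f : EuclideanSpace ℝ (Fin p) → ℝ)
    (f' : EuclideanSpace ℝ (Fin p) → EuclideanSpace ℝ (Fin p))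
    (hf : ∀ x, HasGradientAt f (f' x) x)
    (hlip : ∀ x y, ‖f' x - f' y‖ ≤ L * ‖x - y‖)
    (Fnor : EuclideanSpace ℝ (Fin p) → EuclideanSpace ℝ (Fin p))
    (hFnor : ∀ z, Fnor z = f' (prox z) + γ⁻¹ • (z - prox z))
    (Fnat : EuclideanSpace ℝ (Fin p) → EuclideanSpace ℝ (Fin p))
    (hFnat : ∀ x, Fnat x = γ⁻¹ • (x - prox (x - γ • f' x))) :
    ∀ z : EuclideanSpace ℝ (Fin p),
      (1 - γ * ρ) * ‖Fnat (prox z)‖ ≤ ‖Fnor z‖ :=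
  natural_map_le_normal_map_general ρ γ hγ φ hφwc prox hprox f' Fnor hFnor Fnat hFnat
end

section
/- (Deterministic Lyapunov descent for the normal-map step, eq. (cH).) Assume γ ≤ 1/(5(ρ + L)) and let δ > 0 satisfy δ ≤ min{(1 − γρ)γ/10, 1/(10L)}. For any z₁, e ∈ ℝ^p, set z₂ := z₁ − δ F^nor(z₁) + e, x₁ := prox_{γφ}(z₁), x₂ := prox_{γφ}(z₂). Then H(z₂) ≤ H(z₁) − (C₀ δ/2)‖F^nor(z₁)‖² − (1/(8δ))‖x₁ − x₂‖² + (1/δ)‖e‖². -/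
/-!
Write `xₖ = prox zₖ`, `d = x₁ - x₂`, `Fₖ = F^nor(zₖ)`. Weak convexity makes the prox objective
`(γ⁻¹ - ρ)`-strongly convex, so `γ⁻¹ (z - prox z)` is a `ρ`-weak subgradient of `φ` at `prox z`.
With the descent lemma for `f` this gives `ψ(x₂) ≤ ψ(x₁) - ⟪g, d⟫ + (ρ + L)/2 ‖d‖²`, where
`γ g = (γ - δ) F₁ + d + e`, and it makes `prox` hypomonotone,
`(1 - γρ) ‖d‖² ≤ ⟪d, z₁ - z₂⟫ = ⟪d, δ F₁ - e⟫`, which bounds `⟪F₁, d⟫` from below.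
Since `F₂ = g + ∇f(x₂) - ∇f(x₁)`, Young's inequality with weights `γ - δ` and `δ` bounds
`γ ‖F₂‖²` by `(γ - δ) ‖F₁‖²` plus terms in `⟪F₁, d⟫`, `‖d‖` and `‖e‖`; what is left is a
quadratic form in `‖d‖, ‖e‖` which is negative enough because `C₀ ∈ [1/3, 1/2]`,
`γ (ρ + L) ≤ 1/5` and `δ ≤ γ / 10`.
-/

open Set Filter Topology
open scoped RealInnerProductSpace

section

variable {F : Type*} [NormedAddCommGroup F] [InnerProductSpace ℝ F]

theorem StrongConvexOn.add_sq_norm_sub_le_of_isMinOn {s : Set F} {m : ℝ} {g : F → ℝ} {x y : F}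
    (hg : StrongConvexOn s m g) (hx : IsMinOn g s x) (hxs : x ∈ s) (hys : y ∈ s) :
    g x + m / 2 * ‖y - x‖ ^ 2 ≤ g y := by
  have hsegment : ∀ t ∈ Ioo (0 : ℝ) 1, g x + (1 - t) * (m / 2 * ‖y - x‖ ^ 2) ≤ g y := by
    intro t ⟨ht0, ht1⟩
    have hconv := hg.2 hxs hys (sub_nonneg.2 ht1.le) ht0.le (sub_add_cancel 1 t)
    have hmin : g x ≤ g ((1 - t) • x + t • y) :=
      hx (hg.1 hxs hys (sub_nonneg.2 ht1.le) ht0.le (sub_add_cancel 1 t))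
    rw [norm_sub_rev] at hconv
    simp only [smul_eq_mul] at hconv
    nlinarith
  have hlim : Tendsto (fun t : ℝ => g x + (1 - t) * (m / 2 * ‖y - x‖ ^ 2)) (𝓝[>] 0)
      (𝓝 (g x + (1 - 0) * (m / 2 * ‖y - x‖ ^ 2))) :=
    ((continuous_const.add ((continuous_const.sub continuous_id).mul
      continuous_const)).tendsto 0).mono_left nhdsWithin_le_nhds
  simpa using le_of_tendsto hlim (mem_of_superset (Ioo_mem_nhdsGT one_pos) hsegment)

theorem strongConvexOn_prox_objective {φ : F → ℝ} {ρ γ : ℝ} (z : F)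
    (hφ : ConvexOn ℝ univ fun y => φ y + ρ / 2 * ‖y‖ ^ 2) :
    StrongConvexOn univ (γ⁻¹ - ρ) fun y => φ y + ‖y - z‖ ^ 2 / (2 * γ) := by
  rw [strongConvexOn_iff_convex]
  have haffine : ConvexOn ℝ univ fun y => (-γ⁻¹ • innerₛₗ ℝ z) y + γ⁻¹ / 2 * ‖z‖ ^ 2 :=
    (LinearMap.convexOn _ convex_univ).add_const _
  refine (hφ.add haffine).congr fun y _ => ?_
  simp only [Pi.add_apply, LinearMap.smul_apply, innerₛₗ_apply_apply, smul_eq_mul,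
    norm_sub_sq_real, real_inner_comm z]
  ring

theorem prox_weak_subgradient {φ : F → ℝ} {ρ γ : ℝ} {z x : F}
    (hφ : ConvexOn ℝ univ fun y => φ y + ρ / 2 * ‖y‖ ^ 2)
    (hx : IsMinOn (fun y => φ y + ‖y - z‖ ^ 2 / (2 * γ)) univ x) (y : F) :
    φ x + γ⁻¹ * ⟪z - x, y - x⟫ ≤ φ y + ρ / 2 * ‖y - x‖ ^ 2 := by
  have h := (strongConvexOn_prox_objective z hφ).add_sq_norm_sub_le_of_isMinOn hx
    (mem_univ x) (mem_univ y)
  have hexp : ‖y - z‖ ^ 2 = ‖y - x‖ ^ 2 - 2 * ⟪z - x, y - x⟫ + ‖x - z‖ ^ 2 := by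
    rw [← sub_sub_sub_cancel_right y z x, norm_sub_sq_real, real_inner_comm, norm_sub_rev z x]
  simp only [hexp, div_eq_mul_inv, mul_inv] at h
  linarith

theorem prox_hypomonotone {φ : F → ℝ} {ρ γ : ℝ} {z₁ z₂ x₁ x₂ : F} (hγ : 0 < γ)
    (hφ : ConvexOn ℝ univ fun y => φ y + ρ / 2 * ‖y‖ ^ 2)
    (hx₁ : IsMinOn (fun y => φ y + ‖y - z₁‖ ^ 2 / (2 * γ)) univ x₁)
    (hx₂ : IsMinOn (fun y => φ y + ‖y - z₂‖ ^ 2 / (2 * γ)) univ x₂) :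
    (1 - γ * ρ) * ‖x₁ - x₂‖ ^ 2 ≤ ⟪x₁ - x₂, z₁ - z₂⟫ := by
  have h₁ := prox_weak_subgradient hφ hx₁ x₂
  have h₂ := prox_weak_subgradient hφ hx₂ x₁
  have hsum : γ⁻¹ * (‖x₁ - x₂‖ ^ 2 - ⟪x₁ - x₂, z₁ - z₂⟫) ≤ ρ * ‖x₁ - x₂‖ ^ 2 := by
    have hexp : ⟪z₁ - x₁, x₂ - x₁⟫ + ⟪z₂ - x₂, x₁ - x₂⟫
        = ‖x₁ - x₂‖ ^ 2 - ⟪x₁ - x₂, z₁ - z₂⟫ := by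
      rw [← neg_sub x₁ x₂, inner_neg_right, ← real_inner_self_eq_norm_sq]
      simp only [inner_sub_left, inner_sub_right, real_inner_comm]
      ring
    rw [norm_sub_rev x₂ x₁] at h₁
    linear_combination h₁ + h₂ - γ⁻¹ * hexp
  have := mul_le_mul_of_nonneg_left hsum hγ.le
  rw [← mul_assoc, mul_inv_cancel₀ hγ.ne'] at this
  linarith

theorem le_add_inner_add_sq_of_lipschitz_gradient [CompleteSpace F] {f : F → ℝ} {f' : F → F}
    {L : ℝ} (hf : ∀ x, HasGradientAt f (f' x) x) (hlip : ∀ x y, ‖f' x - f' y‖ ≤ L * ‖x - y‖)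
    (x y : F) : f y ≤ f x + ⟪f' x, y - x⟫ + L / 2 * ‖y - x‖ ^ 2 := by
  set v := y - x
  have hderiv : ∀ t : ℝ, HasDerivAt (fun t : ℝ => f (x + t • v)) ⟪f' (x + t • v), v⟫ t := by
    intro t
    have hline : HasDerivAt (fun t : ℝ => x + t • v) v t := by
      simpa using ((hasDerivAt_id t).smul_const v).const_add x
    exact (hf _).hasFDerivAt.comp_hasDerivAt t hline |>.congr_deriv (by simp)
  have hbound : ∀ t : ℝ, HasDerivAt (fun t : ℝ => f x + t * ⟪f' x, v⟫ + L / 2 * t ^ 2 * ‖v‖ ^ 2)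
      (⟪f' x, v⟫ + L * t * ‖v‖ ^ 2) t := by
    intro t
    refine ((((hasDerivAt_id' t).mul_const ⟪f' x, v⟫).const_add (f x)).add
      (((hasDerivAt_pow 2 t).const_mul (L / 2)).mul_const (‖v‖ ^ 2))).congr_deriv ?_
    push_cast
    ring
  have hslope : ∀ t ∈ Ico (0 : ℝ) 1, ⟪f' (x + t • v), v⟫ ≤ ⟪f' x, v⟫ + L * t * ‖v‖ ^ 2 := by
    intro t ⟨ht0, _⟩
    have hcs := real_inner_le_norm (f' (x + t • v) - f' x) v
    have hlipt : ‖f' (x + t • v) - f' x‖ ≤ L * t * ‖v‖ := by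
      simpa [norm_smul, abs_of_nonneg ht0, mul_assoc] using hlip (x + t • v) x
    rw [inner_sub_left] at hcs
    nlinarith [norm_nonneg v]
  have h := image_le_of_deriv_right_le_deriv_boundary
    (fun t _ => (hderiv t).continuousAt.continuousWithinAt) (fun t _ => (hderiv t).hasDerivWithinAt)
    (by simp) (fun t _ => (hbound t).continuousAt.continuousWithinAt)
    (fun t _ => (hbound t).hasDerivWithinAt) hslope (right_mem_Icc.2 zero_le_one)
  simpa [v] using h

theorem mul_mul_norm_add_sq_le (a b : ℝ) (u w : F) :
    a * b * ‖u + w‖ ^ 2 ≤ (a + b) * (b * ‖u‖ ^ 2 + a * ‖w‖ ^ 2) := by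
  have h := sq_nonneg ‖b • u - a • w‖
  rw [norm_sub_sq_real, norm_smul, norm_smul, real_inner_smul_left, real_inner_smul_right,
    Real.norm_eq_abs, Real.norm_eq_abs, mul_pow, mul_pow, sq_abs, sq_abs] at h
  rw [norm_add_sq_real]
  nlinarith

theorem prox_grad_descent [CompleteSpace F] {f φ : F → ℝ} {f' : F → F} {ρ γ L : ℝ} {z x : F}
    (hf : ∀ x, HasGradientAt f (f' x) x) (hlip : ∀ x y, ‖f' x - f' y‖ ≤ L * ‖x - y‖)
    (hφ : ConvexOn ℝ univ fun y => φ y + ρ / 2 * ‖y‖ ^ 2)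
    (hx : IsMinOn (fun y => φ y + ‖y - z‖ ^ 2 / (2 * γ)) univ x) (y : F) :
    f x + φ x ≤ f y + φ y - ⟪f' y + γ⁻¹ • (z - x), y - x⟫ + (ρ + L) / 2 * ‖y - x‖ ^ 2 := by
  have hφx := prox_weak_subgradient hφ hx y
  have hfx := le_add_inner_add_sq_of_lipschitz_gradient hf hlip y x
  rw [norm_sub_rev x y, ← neg_sub y x, inner_neg_right] at hfx
  rw [inner_add_left, real_inner_smul_left]
  linarith

theorem normalMap_const_mem_Icc {γ ρ L : ℝ} (hγ : 0 ≤ γ) (hρ : 0 ≤ ρ) (hL : 0 ≤ L)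
    (hγρL : γ * (ρ + L) ≤ 1 / 5) :
    (3 - 4 * γ * ρ) / (2 * (3 - 4 * γ * ρ + 4 * γ ^ 2 * L ^ 2)) ∈ Icc (1 / 3) (1 / 2) := by
  have hγρ : γ * ρ ≤ 1 / 5 := by nlinarith [mul_nonneg hγ hL]
  have hγL : γ * L ≤ 1 / 5 := by nlinarith [mul_nonneg hγ hρ]
  have hγL0 : 0 ≤ γ * L := mul_nonneg hγ hL
  have hden : 0 < 2 * (3 - 4 * γ * ρ + 4 * γ ^ 2 * L ^ 2) := by nlinarith
  constructor
  · rw [le_div_iff₀ hden]; nlinarith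
  · rw [div_le_iff₀ hden]; nlinarith

theorem lyapunov_step_coeff_nonpos {γ δ ρ L C : ℝ} (hγ : 0 < γ) (hδ : 0 < δ) (hρ : 0 ≤ ρ)
    (hL : 0 ≤ L) (hγρL : γ * (ρ + L) ≤ 1 / 5) (hδγ : 10 * δ ≤ γ) (hC : C ∈ Icc (1 / 3) (1 / 2)) :
    δ * γ * (L - ρ) + γ * (C / 9 - 2 * (1 - C) * (1 - γ * ρ) + 2 * C * (γ * L) ^ 2
      + (1 - C) ^ 2 + 1 / 4) ≤ 0 := by
  obtain ⟨hC₁, hC₂⟩ := hC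
  have hγρ : γ * ρ ≤ 1 / 5 := by nlinarith [mul_nonneg hγ.le hL]
  have hγL : γ * L ≤ 1 / 5 := by nlinarith [mul_nonneg hγ.le hρ]
  have hδL : δ * γ * (L - ρ) ≤ γ * (1 / 50) := by
    nlinarith only [mul_le_mul_of_nonneg_right hδγ (mul_nonneg hγ.le hL), hγL, hγ,
      mul_nonneg hδ.le (mul_nonneg hγ.le hρ)]
  have hbracket : 1 / 50 + C / 9 - 2 * (1 - C) * (1 - γ * ρ) + 2 * C * (γ * L) ^ 2
      + (1 - C) ^ 2 + 1 / 4 ≤ 0 := by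
    nlinarith only [mul_le_mul_of_nonneg_left hγρ (by linarith : (0:ℝ) ≤ 1 - C),
      mul_le_mul_of_nonneg_left (pow_le_pow_left₀ (mul_nonneg hγ.le hL) hγL 2)
        (by linarith : (0:ℝ) ≤ C), mul_nonneg (sub_nonneg.2 hC₁) (sub_nonneg.2 hC₂)]
  linarith only [hδL, mul_le_mul_of_nonneg_left hbracket hγ.le]

theorem lyapunov_step_scalar {γ δ ρ L C ψ₁ ψ₂ a b D E i j : ℝ}
    (hγ : 0 < γ) (hδ : 0 < δ) (hρ : 0 ≤ ρ) (hL : 0 ≤ L) (hγρL : γ * (ρ + L) ≤ 1 / 5)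
    (hδγ : δ ≤ (1 - γ * ρ) * γ / 10) (hC : C ∈ Icc (1 / 3) (1 / 2))
    (hψ : γ * (ψ₂ - ψ₁) ≤ -((γ - δ) * i + D ^ 2 + j) + γ * (ρ + L) / 2 * D ^ 2)
    (hmono : (1 - γ * ρ) * D ^ 2 ≤ δ * i - j) (hj : -(D * E) ≤ j)
    (hyoung : (γ - δ) * δ * (γ ^ 2 * b) ≤
      γ * (δ * ((γ - δ) ^ 2 * a ^ 2 + 2 * (γ - δ) * i + D ^ 2) + (γ - δ) * (γ * L * D + E) ^ 2)) :
    ψ₂ + γ * C / 2 * b ≤ ψ₁ + γ * C / 2 * a ^ 2 - C * δ / 2 * a ^ 2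
      - 1 / (8 * δ) * D ^ 2 + 1 / δ * E ^ 2 := by
  have hδ10 : 10 * δ ≤ γ := by nlinarith [mul_nonneg hγ.le hρ]
  have hcoef := lyapunov_step_coeff_nonpos hγ hδ hρ hL hγρL hδ10 hC
  obtain ⟨hC₁, hC₂⟩ := hC
  have hb : δ * γ * b ≤ δ * (γ - δ) * a ^ 2 + 2 * δ * i + D ^ 2 / 9 + (γ * L * D + E) ^ 2 := by
    have hpos : 0 < (γ - δ) * γ := by nlinarith
    refine le_of_mul_le_mul_left ?_ hpos
    nlinarith [mul_le_mul_of_nonneg_left (by linarith : 9 * δ ≤ γ - δ)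
      (mul_nonneg hγ.le (sq_nonneg D))]
  have hW : (γ * L * D + E) ^ 2 ≤ 2 * (γ * L) ^ 2 * D ^ 2 + 2 * E ^ 2 := by
    nlinarith [sq_nonneg (γ * L * D - E)]
  -- the multipliers of `hψ`, `hb`, `hmono`, `hj` are chosen so that `i` and `j` cancel
  have key : 2 * γ * δ * (ψ₂ - ψ₁) + C * γ * (δ * γ * b)
      ≤ C * γ * δ * (γ - δ) * a ^ 2 - γ * D ^ 2 / 4 + 2 * γ * E ^ 2 := by
    linarith only [mul_le_mul_of_nonneg_left hψ (by positivity : (0:ℝ) ≤ 2 * δ),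
      mul_le_mul_of_nonneg_left hb (by positivity : (0:ℝ) ≤ C * γ),
      mul_le_mul_of_nonneg_left hmono
        (by nlinarith only [hδ10, hC₂, hγ] : (0:ℝ) ≤ 2 * (γ * (1 - C) - δ)),
      mul_le_mul_of_nonneg_left hj (by nlinarith only [hC₂, hγ] : (0:ℝ) ≤ 2 * γ * (1 - C)),
      mul_le_mul_of_nonneg_left hW (by positivity : (0:ℝ) ≤ C * γ),
      mul_nonneg hγ.le (sq_nonneg ((1 - C) * D - E)),
      mul_le_mul_of_nonneg_right hcoef (sq_nonneg D),
      mul_nonneg (by nlinarith only [hC₂, hγ] : (0:ℝ) ≤ (1 - 2 * C) * γ) (sq_nonneg E)]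
  rw [← sub_nonneg]
  have hscale : ψ₁ + γ * C / 2 * a ^ 2 - C * δ / 2 * a ^ 2 - 1 / (8 * δ) * D ^ 2 + 1 / δ * E ^ 2
      - (ψ₂ + γ * C / 2 * b) = (C * γ * δ * (γ - δ) * a ^ 2 - γ * D ^ 2 / 4 + 2 * γ * E ^ 2
        - (2 * γ * δ * (ψ₂ - ψ₁) + C * γ * (δ * γ * b))) / (2 * γ * δ) := by
    field_simp
    ring
  rw [hscale]
  exact div_nonneg (sub_nonneg.2 key) (by positivity)

theorem lyapunov_step_of_estimates {γ δ ρ L C ψ₁ ψ₂ : ℝ} {F₁ F₂ g V d e : F}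
    (hγ : 0 < γ) (hδ : 0 < δ) (hρ : 0 ≤ ρ) (hL : 0 ≤ L) (hγρL : γ * (ρ + L) ≤ 1 / 5)
    (hδγ : δ ≤ (1 - γ * ρ) * γ / 10) (hC : C ∈ Icc (1 / 3) (1 / 2))
    (hψ : ψ₂ ≤ ψ₁ - ⟪g, d⟫ + (ρ + L) / 2 * ‖d‖ ^ 2)
    (hg : γ • g = (γ - δ) • F₁ + d + e)
    (hmono : (1 - γ * ρ) * ‖d‖ ^ 2 ≤ ⟪d, δ • F₁ - e⟫)
    (hF₂ : F₂ = g + V) (hV : ‖V‖ ≤ L * ‖d‖) :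
    ψ₂ + γ * C / 2 * ‖F₂‖ ^ 2 ≤ ψ₁ + γ * C / 2 * ‖F₁‖ ^ 2 - C * δ / 2 * ‖F₁‖ ^ 2
      - 1 / (8 * δ) * ‖d‖ ^ 2 + 1 / δ * ‖e‖ ^ 2 := by
  refine lyapunov_step_scalar (i := ⟪F₁, d⟫) (j := ⟪d, e⟫) hγ hδ hρ hL hγρL hδγ hC ?_ ?_
    (abs_le.1 (abs_real_inner_le_norm d e)).1 ?_
  · have hgd : γ * ⟪g, d⟫ = (γ - δ) * ⟪F₁, d⟫ + ‖d‖ ^ 2 + ⟪d, e⟫ := by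
      rw [← real_inner_smul_left, hg, inner_add_left, inner_add_left, real_inner_smul_left,
        real_inner_self_eq_norm_sq, real_inner_comm e]
    linarith [mul_le_mul_of_nonneg_left hψ hγ.le]
  · rwa [inner_sub_right, real_inner_smul_right, real_inner_comm] at hmono
  · have hsplit : γ • F₂ = ((γ - δ) • F₁ + d) + (e + γ • V) := by
      rw [hF₂, smul_add, hg]; abel
    have hw : ‖e + γ • V‖ ≤ γ * L * ‖d‖ + ‖e‖ := by
      calc ‖e + γ • V‖ ≤ ‖e‖ + γ * ‖V‖ := by
            simpa [norm_smul, abs_of_pos hγ] using norm_add_le e (γ • V)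
        _ ≤ γ * L * ‖d‖ + ‖e‖ := by nlinarith
    have hu : ‖(γ - δ) • F₁ + d‖ ^ 2
        = (γ - δ) ^ 2 * ‖F₁‖ ^ 2 + 2 * (γ - δ) * ⟪F₁, d⟫ + ‖d‖ ^ 2 := by
      rw [norm_add_sq_real, norm_smul, real_inner_smul_left, mul_pow, Real.norm_eq_abs, sq_abs]
      ring
    have hyoung := mul_mul_norm_add_sq_le (γ - δ) δ ((γ - δ) • F₁ + d) (e + γ • V)
    rw [← hsplit, norm_smul, mul_pow, Real.norm_eq_abs, sq_abs, hu, sub_add_cancel] at hyoung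
    have hδγ' : 0 ≤ γ - δ := by nlinarith [mul_nonneg hγ.le hρ]
    refine hyoung.trans ?_
    gcongr

end

theorem lyapunov_descent_normal_map_step_general
    {p : ℕ} (ρ γ L δ : ℝ) (hρ : 0 ≤ ρ) (hγ : 0 < γ)
    (hL : 0 < L) (hγle : γ ≤ 1 / (5 * (ρ + L)))
    (hδ : 0 < δ) (hδle : δ ≤ min ((1 - γ * ρ) * γ / 10) (1 / (10 * L)))
    (φ : EuclideanSpace ℝ (Fin p) → ℝ)
    (hφwc : ConvexOn ℝ Set.univ (fun y => φ y + ρ / 2 * ‖y‖ ^ 2))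
    (prox : EuclideanSpace ℝ (Fin p) → EuclideanSpace ℝ (Fin p))
    (hprox : ∀ z, IsMinOn (fun y => φ y + ‖y - z‖ ^ 2 / (2 * γ)) Set.univ (prox z))
    (f : EuclideanSpace ℝ (Fin p) → ℝ)
    (f' : EuclideanSpace ℝ (Fin p) → EuclideanSpace ℝ (Fin p))
    (hf : ∀ x, HasGradientAt f (f' x) x)
    (hlip : ∀ x y, ‖f' x - f' y‖ ≤ L * ‖x - y‖)
    (ψ : EuclideanSpace ℝ (Fin p) → ℝ) (hψ : ∀ x, ψ x = f x + φ x)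
    (Fnor : EuclideanSpace ℝ (Fin p) → EuclideanSpace ℝ (Fin p))
    (hFnor : ∀ z, Fnor z = f' (prox z) + γ⁻¹ • (z - prox z))
    (C₀ : ℝ) (hC₀ : C₀ = (3 - 4 * γ * ρ) / (2 * (3 - 4 * γ * ρ + 4 * γ ^ 2 * L ^ 2)))
    (H : EuclideanSpace ℝ (Fin p) → ℝ)
    (hH : ∀ z, H z = ψ (prox z) + γ * C₀ / 2 * ‖Fnor z‖ ^ 2)
    (z₁ e z₂ : EuclideanSpace ℝ (Fin p))
    (hz₂ : z₂ = z₁ - δ • Fnor z₁ + e) :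
    H z₂ ≤ H z₁ - C₀ * δ / 2 * ‖Fnor z₁‖ ^ 2
      - 1 / (8 * δ) * ‖prox z₁ - prox z₂‖ ^ 2 + 1 / δ * ‖e‖ ^ 2 := by
  have hγρL : γ * (ρ + L) ≤ 1 / 5 := by
    have := (le_div_iff₀ (by positivity : (0 : ℝ) < 5 * (ρ + L))).1 hγle
    linarith
  have hC : C₀ ∈ Icc (1 / 3) (1 / 2) := hC₀ ▸ normalMap_const_mem_Icc hγ.le hρ hL.le hγρL
  have hstep : γ • (f' (prox z₁) + γ⁻¹ • (z₂ - prox z₂))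
      = (γ - δ) • Fnor z₁ + (prox z₁ - prox z₂) + e := by
    have hz₁ : z₁ - prox z₁ = γ • (Fnor z₁ - f' (prox z₁)) := by
      rw [hFnor, add_sub_cancel_left, smul_inv_smul₀ hγ.ne']
    calc γ • (f' (prox z₁) + γ⁻¹ • (z₂ - prox z₂))
        = γ • f' (prox z₁) + (z₁ - prox z₁) + (prox z₁ - prox z₂) - δ • Fnor z₁ + e := by
          rw [smul_add, smul_inv_smul₀ hγ.ne', hz₂]; abel
      _ = (γ - δ) • Fnor z₁ + (prox z₁ - prox z₂) + e := by rw [hz₁]; module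
  have hFnor₂ : Fnor z₂
      = (f' (prox z₁) + γ⁻¹ • (z₂ - prox z₂)) + (f' (prox z₂) - f' (prox z₁)) := by
    rw [hFnor]; abel
  have hmono := prox_hypomonotone hγ hφwc (hprox z₁) (hprox z₂)
  rw [show z₁ - z₂ = δ • Fnor z₁ - e by rw [hz₂]; abel] at hmono
  rw [hH, hH, hψ, hψ]
  exact lyapunov_step_of_estimates hγ hδ hρ hL.le hγρL (le_min_iff.1 hδle).1 hC
    (prox_grad_descent hf hlip hφwc (hprox z₂) (prox z₁)) hstep hmono hFnor₂
    (by simpa only [norm_sub_rev] using hlip (prox z₂) (prox z₁))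

/-- Deterministic Lyapunov descent for the normal-map step (eq. (cH)): for
`z₂ = z₁ − δ F^nor(z₁) + e`, the Lyapunov function
`H(z) = ψ(prox_{γφ}(z)) + (γC₀/2)‖F^nor(z)‖²` satisfies
`H(z₂) ≤ H(z₁) − (C₀δ/2)‖F^nor(z₁)‖² − (1/(8δ))‖x₁ − x₂‖² + (1/δ)‖e‖²`. -/
theorem lyapunov_descent_normal_map_step
    {p : ℕ} (hp : 1 ≤ p) (ρ γ L δ : ℝ) (hρ : 0 ≤ ρ) (hγ : 0 < γ) (hγρ : γ * ρ < 1)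
    (hL : 0 < L) (hγle : γ ≤ 1 / (5 * (ρ + L)))
    (hδ : 0 < δ) (hδle : δ ≤ min ((1 - γ * ρ) * γ / 10) (1 / (10 * L)))
    (φ : EuclideanSpace ℝ (Fin p) → ℝ)
    (hφlsc : LowerSemicontinuous φ)
    (hφwc : ConvexOn ℝ Set.univ (fun y => φ y + ρ / 2 * ‖y‖ ^ 2))
    (prox : EuclideanSpace ℝ (Fin p) → EuclideanSpace ℝ (Fin p))
    (hprox : ∀ z, IsMinOn (fun y => φ y + ‖y - z‖ ^ 2 / (2 * γ)) Set.univ (prox z))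
    (hproxUnique : ∀ z u,
      IsMinOn (fun y => φ y + ‖y - z‖ ^ 2 / (2 * γ)) Set.univ u → u = prox z)
    (f : EuclideanSpace ℝ (Fin p) → ℝ)
    (f' : EuclideanSpace ℝ (Fin p) → EuclideanSpace ℝ (Fin p))
    (hf : ∀ x, HasGradientAt f (f' x) x)
    (hlip : ∀ x y, ‖f' x - f' y‖ ≤ L * ‖x - y‖)
    (ψ : EuclideanSpace ℝ (Fin p) → ℝ) (hψ : ∀ x, ψ x = f x + φ x)
    (Fnor : EuclideanSpace ℝ (Fin p) → EuclideanSpace ℝ (Fin p))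
    (hFnor : ∀ z, Fnor z = f' (prox z) + γ⁻¹ • (z - prox z))
    (C₀ : ℝ) (hC₀ : C₀ = (3 - 4 * γ * ρ) / (2 * (3 - 4 * γ * ρ + 4 * γ ^ 2 * L ^ 2)))
    (H : EuclideanSpace ℝ (Fin p) → ℝ)
    (hH : ∀ z, H z = ψ (prox z) + γ * C₀ / 2 * ‖Fnor z‖ ^ 2)
    (z₁ e z₂ : EuclideanSpace ℝ (Fin p))
    (hz₂ : z₂ = z₁ - δ • Fnor z₁ + e) :
    H z₂ ≤ H z₁ - C₀ * δ / 2 * ‖Fnor z₁‖ ^ 2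
      - 1 / (8 * δ) * ‖prox z₁ - prox z₂‖ ^ 2 + 1 / δ * ‖e‖ ^ 2 :=
  lyapunov_descent_normal_map_step_general ρ γ L δ hρ hγ hL hγle hδ hδle φ hφwc prox hprox f f' hf
    hlip ψ hψ Fnor hFnor C₀ hC₀ H hH z₁ e z₂ hz₂
end

section
/- (Update-direction recursion, eq. (yitp1).) For every t ∈ ℕ and every i: y_{i,t+1} = (1/n)∑_{j=1}^n y_{j,t} + (1/Q)∑_{ℓ=0}^{Q−1}[g_{i,t+1}^ℓ + γ^{-1}(z_{t+1} − x_{t+1})] − (1/Q)∑_{ℓ=0}^{Q−1}[g_{i,t}^ℓ + γ^{-1}(z_t − x_t)]. -/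
open Finset

/-- Update-direction recursion (eq. (yitp1)): each `y_{i,t}` satisfies
`y_{i,t+1} = (1/n)∑_j y_{j,t} + (1/Q)∑_ℓ [g_{i,t+1}^ℓ + γ⁻¹(z_{t+1} − x_{t+1})]
  − (1/Q)∑_ℓ [g_{i,t}^ℓ + γ⁻¹(z_t − x_t)]`. -/
theorem fednmap_update_direction_recursion
    {p : ℕ} (hp : 1 ≤ p) (n Q : ℕ) (hn : 1 ≤ n) (hQ : 1 ≤ Q)
    (ηa ηs γ : ℝ) (hηa : 0 < ηa) (hηs : 0 < ηs) (hγ : 0 < γ)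
    (P : EuclideanSpace ℝ (Fin p) → EuclideanSpace ℝ (Fin p))
    (g : Fin n → ℕ → ℕ → EuclideanSpace ℝ (Fin p))
    (z : ℕ → EuclideanSpace ℝ (Fin p))
    (x : ℕ → EuclideanSpace ℝ (Fin p))
    (zi : Fin n → ℕ → ℕ → EuclideanSpace ℝ (Fin p))
    (y : Fin n → ℕ → EuclideanSpace ℝ (Fin p))
    (c : Fin n → ℕ → EuclideanSpace ℝ (Fin p))
    (hc0 : ∀ i, c i 0 = 0)
    (hx : ∀ t, x t = P (z t))
    (hzi0 : ∀ i t, zi i t 0 = z t)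
    (hzistep : ∀ i t ℓ, ℓ < Q →
      zi i t (ℓ + 1) = zi i t ℓ - ηa • (g i t ℓ + γ⁻¹ • (z t - x t) + c i t))
    (hy : ∀ i t, y i t = (ηa * Q)⁻¹ • (z t - zi i t Q))
    (hcstep : ∀ i t, c i (t + 1) = c i t - y i t + (n : ℝ)⁻¹ • ∑ j, y j t)
    (hzstep : ∀ t, z (t + 1) = z t - (ηa * ηs * Q / n) • ∑ i, y i t) :
    ∀ (t : ℕ) (i : Fin n),
      y i (t + 1) = (n : ℝ)⁻¹ • ∑ j, y j t
        + (Q : ℝ)⁻¹ • ∑ ℓ ∈ range Q, (g i (t + 1) ℓ + γ⁻¹ • (z (t + 1) - x (t + 1)))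
        - (Q : ℝ)⁻¹ • ∑ ℓ ∈ range Q, (g i t ℓ + γ⁻¹ • (z t - x t)) := by

  have hkey : ∀ t i, y i t = (Q : ℝ)⁻¹ • ∑ ℓ ∈ range Q, (g i t ℓ + γ⁻¹ • (z t - x t)) + c i t := by
    intro t i
    have hunfold : ∀ m, m ≤ Q →
        zi i t m = z t - ηa • ∑ ℓ ∈ range m, (g i t ℓ + γ⁻¹ • (z t - x t) + c i t) := by
      intro m hm
      induction m with
      | zero => simp [hzi0]
      | succ k ih =>
        rw [hzistep i t k (by omega), ih (by omega), Finset.sum_range_succ]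
        module
    have hQ0 : (Q : ℝ) ≠ 0 := by positivity
    have hηa0 : (ηa : ℝ) ≠ 0 := ne_of_gt hηa
    rw [hy, hunfold Q le_rfl]
    have : ∑ ℓ ∈ range Q, (g i t ℓ + γ⁻¹ • (z t - x t) + c i t)
        = (∑ ℓ ∈ range Q, (g i t ℓ + γ⁻¹ • (z t - x t))) + (Q : ℝ) • c i t := by
      rw [Finset.sum_add_distrib, Finset.sum_const, card_range, ← Nat.cast_smul_eq_nsmul ℝ]
    rw [this]
    have : z t - (z t - ηa • (∑ ℓ ∈ range Q, (g i t ℓ + γ⁻¹ • (z t - x t)) + (Q : ℝ) • c i t))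
        = ηa • (∑ ℓ ∈ range Q, (g i t ℓ + γ⁻¹ • (z t - x t)) + (Q : ℝ) • c i t) := by abel
    rw [this]
    match_scalars <;> field_simp
  intro t i
  have h1 := hkey (t + 1) i
  have h2 := hkey t i
  rw [h1, hcstep, h2]
  abel
end
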